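/- arXiv:1902.01443 — 5 statements merged into one kernel-verified Lean document; each statement's English description precedes it below -/
import Mathlib

section
/- In the two-unit front-door network model with all kernels strictly positive, the observed margin satisfies the conditional independence Y₂ ⟂ (M₁, C₁) | (A₁, A₂, M₂, C₂): for all values, pV(y₂ | a₁, a₂, m₁, m₂, c₁, c₂) = pV(y₂ | a₁, a₂, m₂, c₂), where both sides are ratios of marginal sums of the observed margin pV. -/
open scoped Classical

noncomputable section

/-- The two-unit front-door network model: finite nonempty state spaces for
baseline covariates `C`, unobserved confounders `U`, treatments `A`,
mediators `M` and outcomes `Y` of two units, together with the probability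
kernels of the model (each nonnegative and summing to 1 over its first
argument). -/
structure TwoUnitFrontDoor (C₁ C₂ U₁ U₂ A₁ A₂ M₁ M₂ Y₁ Y₂ : Type)
    [Fintype C₁] [Fintype C₂] [Fintype U₁] [Fintype U₂] [Fintype A₁] [Fintype A₂]
    [Fintype M₁] [Fintype M₂] [Fintype Y₁] [Fintype Y₂]
    [Nonempty C₁] [Nonempty C₂] [Nonempty U₁] [Nonempty U₂] [Nonempty A₁] [Nonempty A₂]
    [Nonempty M₁] [Nonempty M₂] [Nonempty Y₁] [Nonempty Y₂] where
  pC1 : C₁ → ℝ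
  pC2 : C₂ → ℝ
  pU1 : U₁ → ℝ
  pU2 : U₂ → ℝ
  pA1 : A₁ → C₁ → U₁ → ℝ
  pA2 : A₂ → C₂ → U₂ → ℝ
  pM : M₁ → M₂ → A₁ → A₂ → C₁ → C₂ → ℝ
  pY1 : Y₁ → C₁ → U₁ → M₁ → A₂ → ℝ
  pY2 : Y₂ → C₂ → U₂ → M₂ → A₁ → ℝ
  pC1_nonneg : ∀ c₁, 0 ≤ pC1 c₁
  pC1_sum : ∑ c₁, pC1 c₁ = 1
  pC2_nonneg : ∀ c₂, 0 ≤ pC2 c₂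
  pC2_sum : ∑ c₂, pC2 c₂ = 1
  pU1_nonneg : ∀ u₁, 0 ≤ pU1 u₁
  pU1_sum : ∑ u₁, pU1 u₁ = 1
  pU2_nonneg : ∀ u₂, 0 ≤ pU2 u₂
  pU2_sum : ∑ u₂, pU2 u₂ = 1
  pA1_nonneg : ∀ a₁ c₁ u₁, 0 ≤ pA1 a₁ c₁ u₁
  pA1_sum : ∀ c₁ u₁, ∑ a₁, pA1 a₁ c₁ u₁ = 1
  pA2_nonneg : ∀ a₂ c₂ u₂, 0 ≤ pA2 a₂ c₂ u₂
  pA2_sum : ∀ c₂ u₂, ∑ a₂, pA2 a₂ c₂ u₂ = 1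
  pM_nonneg : ∀ m₁ m₂ a₁ a₂ c₁ c₂, 0 ≤ pM m₁ m₂ a₁ a₂ c₁ c₂
  pM_sum : ∀ a₁ a₂ c₁ c₂, ∑ m₁, ∑ m₂, pM m₁ m₂ a₁ a₂ c₁ c₂ = 1
  pY1_nonneg : ∀ y₁ c₁ u₁ m₁ a₂, 0 ≤ pY1 y₁ c₁ u₁ m₁ a₂
  pY1_sum : ∀ c₁ u₁ m₁ a₂, ∑ y₁, pY1 y₁ c₁ u₁ m₁ a₂ = 1
  pY2_nonneg : ∀ y₂ c₂ u₂ m₂ a₁, 0 ≤ pY2 y₂ c₂ u₂ m₂ a₁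
  pY2_sum : ∀ c₂ u₂ m₂ a₁, ∑ y₂, pY2 y₂ c₂ u₂ m₂ a₁ = 1

namespace TwoUnitFrontDoor

variable {C₁ C₂ U₁ U₂ A₁ A₂ M₁ M₂ Y₁ Y₂ : Type}
    [Fintype C₁] [Fintype C₂] [Fintype U₁] [Fintype U₂] [Fintype A₁] [Fintype A₂]
    [Fintype M₁] [Fintype M₂] [Fintype Y₁] [Fintype Y₂]
    [Nonempty C₁] [Nonempty C₂] [Nonempty U₁] [Nonempty U₂] [Nonempty A₁] [Nonempty A₂]
    [Nonempty M₁] [Nonempty M₂] [Nonempty Y₁] [Nonempty Y₂]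
    (ℳ : TwoUnitFrontDoor C₁ C₂ U₁ U₂ A₁ A₂ M₁ M₂ Y₁ Y₂)

/-- All the kernels of the model are strictly positive. -/
def StrictlyPositive : Prop :=
  (∀ c₁, 0 < ℳ.pC1 c₁) ∧ (∀ c₂, 0 < ℳ.pC2 c₂) ∧
  (∀ u₁, 0 < ℳ.pU1 u₁) ∧ (∀ u₂, 0 < ℳ.pU2 u₂) ∧
  (∀ a₁ c₁ u₁, 0 < ℳ.pA1 a₁ c₁ u₁) ∧ (∀ a₂ c₂ u₂, 0 < ℳ.pA2 a₂ c₂ u₂) ∧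
  (∀ m₁ m₂ a₁ a₂ c₁ c₂, 0 < ℳ.pM m₁ m₂ a₁ a₂ c₁ c₂) ∧
  (∀ y₁ c₁ u₁ m₁ a₂, 0 < ℳ.pY1 y₁ c₁ u₁ m₁ a₂) ∧
  (∀ y₂ c₂ u₂ m₂ a₁, 0 < ℳ.pY2 y₂ c₂ u₂ m₂ a₁)

/-- The full joint distribution of the model. -/
def joint (c₁ : C₁) (c₂ : C₂) (u₁ : U₁) (u₂ : U₂) (a₁ : A₁) (a₂ : A₂)
    (m₁ : M₁) (m₂ : M₂) (y₁ : Y₁) (y₂ : Y₂) : ℝ :=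
  ℳ.pC1 c₁ * ℳ.pC2 c₂ * ℳ.pU1 u₁ * ℳ.pU2 u₂ *
    ℳ.pA1 a₁ c₁ u₁ * ℳ.pA2 a₂ c₂ u₂ * ℳ.pM m₁ m₂ a₁ a₂ c₁ c₂ *
    ℳ.pY1 y₁ c₁ u₁ m₁ a₂ * ℳ.pY2 y₂ c₂ u₂ m₂ a₁

/-- The observed margin `pV`, summing out the unobserved confounders. -/
def pV (c₁ : C₁) (c₂ : C₂) (a₁ : A₁) (a₂ : A₂) (m₁ : M₁) (m₂ : M₂)
    (y₁ : Y₁) (y₂ : Y₂) : ℝ :=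
  ∑ u₁ : U₁, ∑ u₂ : U₂, ℳ.joint c₁ c₂ u₁ u₂ a₁ a₂ m₁ m₂ y₁ y₂

/-- The observed marginal `pV(c₁)`. -/
def pVc1 (c₁ : C₁) : ℝ :=
  ∑ c₂ : C₂, ∑ a₁ : A₁, ∑ a₂ : A₂, ∑ m₁ : M₁, ∑ m₂ : M₂, ∑ y₁ : Y₁, ∑ y₂ : Y₂,
    ℳ.pV c₁ c₂ a₁ a₂ m₁ m₂ y₁ y₂

/-- The observed marginal `pV(c₂)`. -/
def pVc2 (c₂ : C₂) : ℝ :=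
  ∑ c₁ : C₁, ∑ a₁ : A₁, ∑ a₂ : A₂, ∑ m₁ : M₁, ∑ m₂ : M₂, ∑ y₁ : Y₁, ∑ y₂ : Y₂,
    ℳ.pV c₁ c₂ a₁ a₂ m₁ m₂ y₁ y₂

/-- The observed conditional `pV(a₁ | c₁)`. -/
def pVa1 (a₁ : A₁) (c₁ : C₁) : ℝ :=
  (∑ c₂ : C₂, ∑ a₂ : A₂, ∑ m₁ : M₁, ∑ m₂ : M₂, ∑ y₁ : Y₁, ∑ y₂ : Y₂,
    ℳ.pV c₁ c₂ a₁ a₂ m₁ m₂ y₁ y₂) / ℳ.pVc1 c₁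

/-- The observed conditional `pV(a₂ | c₂)`. -/
def pVa2 (a₂ : A₂) (c₂ : C₂) : ℝ :=
  (∑ c₁ : C₁, ∑ a₁ : A₁, ∑ m₁ : M₁, ∑ m₂ : M₂, ∑ y₁ : Y₁, ∑ y₂ : Y₂,
    ℳ.pV c₁ c₂ a₁ a₂ m₁ m₂ y₁ y₂) / ℳ.pVc2 c₂

/-- The observed conditional `pV(m₁, m₂ | a₁, a₂, c₁, c₂)`. -/
def pVm (m₁ : M₁) (m₂ : M₂) (a₁ : A₁) (a₂ : A₂) (c₁ : C₁) (c₂ : C₂) : ℝ :=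
  (∑ y₁ : Y₁, ∑ y₂ : Y₂, ℳ.pV c₁ c₂ a₁ a₂ m₁ m₂ y₁ y₂) /
    (∑ m₁' : M₁, ∑ m₂' : M₂, ∑ y₁ : Y₁, ∑ y₂ : Y₂, ℳ.pV c₁ c₂ a₁ a₂ m₁' m₂' y₁ y₂)

/-- The observed conditional `pV(y₁ | a₁, a₂, m₁, m₂, c₁, c₂)`. -/
def pVy1Full (y₁ : Y₁) (a₁ : A₁) (a₂ : A₂) (m₁ : M₁) (m₂ : M₂) (c₁ : C₁) (c₂ : C₂) : ℝ :=
  (∑ y₂ : Y₂, ℳ.pV c₁ c₂ a₁ a₂ m₁ m₂ y₁ y₂) /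
    (∑ y₁' : Y₁, ∑ y₂ : Y₂, ℳ.pV c₁ c₂ a₁ a₂ m₁ m₂ y₁' y₂)

/-- The observed conditional `pV(y₂ | a₁, a₂, m₁, m₂, c₁, c₂)`. -/
def pVy2Full (y₂ : Y₂) (a₁ : A₁) (a₂ : A₂) (m₁ : M₁) (m₂ : M₂) (c₁ : C₁) (c₂ : C₂) : ℝ :=
  (∑ y₁ : Y₁, ℳ.pV c₁ c₂ a₁ a₂ m₁ m₂ y₁ y₂) /
    (∑ y₁ : Y₁, ∑ y₂' : Y₂, ℳ.pV c₁ c₂ a₁ a₂ m₁ m₂ y₁ y₂')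

/-- The observed conditional `pV(y₁ | a₁, a₂, m₁, c₁)`. -/
def pVy1 (y₁ : Y₁) (a₁ : A₁) (a₂ : A₂) (m₁ : M₁) (c₁ : C₁) : ℝ :=
  (∑ c₂ : C₂, ∑ m₂ : M₂, ∑ y₂ : Y₂, ℳ.pV c₁ c₂ a₁ a₂ m₁ m₂ y₁ y₂) /
    (∑ c₂ : C₂, ∑ m₂ : M₂, ∑ y₁' : Y₁, ∑ y₂ : Y₂, ℳ.pV c₁ c₂ a₁ a₂ m₁ m₂ y₁' y₂)

/-- The observed conditional `pV(y₂ | a₁, a₂, m₂, c₂)`. -/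
def pVy2 (y₂ : Y₂) (a₁ : A₁) (a₂ : A₂) (m₂ : M₂) (c₂ : C₂) : ℝ :=
  (∑ c₁ : C₁, ∑ m₁ : M₁, ∑ y₁ : Y₁, ℳ.pV c₁ c₂ a₁ a₂ m₁ m₂ y₁ y₂) /
    (∑ c₁ : C₁, ∑ m₁ : M₁, ∑ y₁ : Y₁, ∑ y₂' : Y₂, ℳ.pV c₁ c₂ a₁ a₂ m₁ m₂ y₁ y₂')

end TwoUnitFrontDoor

/-- In the two-unit front-door network model with all kernels
strictly positive, the observed margin satisfies the conditional independence
`Y₂ ⟂ (M₁, C₁) | (A₁, A₂, M₂, C₂)`: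
`pV(y₂ | a₁, a₂, m₁, m₂, c₁, c₂) = pV(y₂ | a₁, a₂, m₂, c₂)`. -/
theorem TwoUnitFrontDoor.y2_indep_m1c1
    {C₁ C₂ U₁ U₂ A₁ A₂ M₁ M₂ Y₁ Y₂ : Type}
    [Fintype C₁] [Fintype C₂] [Fintype U₁] [Fintype U₂] [Fintype A₁] [Fintype A₂]
    [Fintype M₁] [Fintype M₂] [Fintype Y₁] [Fintype Y₂]
    [Nonempty C₁] [Nonempty C₂] [Nonempty U₁] [Nonempty U₂] [Nonempty A₁] [Nonempty A₂]
    [Nonempty M₁] [Nonempty M₂] [Nonempty Y₁] [Nonempty Y₂]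
    (ℳ : TwoUnitFrontDoor C₁ C₂ U₁ U₂ A₁ A₂ M₁ M₂ Y₁ Y₂)
    (hpos : ℳ.StrictlyPositive)
    (y₂ : Y₂) (a₁ : A₁) (a₂ : A₂) (m₁ : M₁) (m₂ : M₂) (c₁ : C₁) (c₂ : C₂) :
    ℳ.pVy2Full y₂ a₁ a₂ m₁ m₂ c₁ c₂ = ℳ.pVy2 y₂ a₁ a₂ m₂ c₂ := by
  obtain ⟨hC1, hC2, hU1, hU2, hA1, hA2, hM, hY1, hY2⟩ := hpos
  set F1 : C₁ → M₁ → Y₁ → ℝ :=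
    fun c m y => ∑ u₁, ℳ.pU1 u₁ * ℳ.pA1 a₁ c u₁ * ℳ.pY1 y c u₁ m a₂ with hF1
  set F2 : Y₂ → ℝ :=
    fun y => ∑ u₂, ℳ.pU2 u₂ * ℳ.pA2 a₂ c₂ u₂ * ℳ.pY2 y c₂ u₂ m₂ a₁ with hF2
  set G1 : C₁ → ℝ := fun c => ∑ u₁, ℳ.pU1 u₁ * ℳ.pA1 a₁ c u₁ with hG1
  set G2 : ℝ := ∑ u₂, ℳ.pU2 u₂ * ℳ.pA2 a₂ c₂ u₂ with hG2
  have key : ∀ (K B : ℝ) (f : Y₁ → ℝ),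
      (∑ y₁, K * f y₁ * B) = K * (∑ y₁, f y₁) * B := by
    intro K B f
    rw [Finset.mul_sum, Finset.sum_mul]
  have hfac : ∀ (c : C₁) (m : M₁) (y₁ : Y₁) (y : Y₂),
      ℳ.pV c c₂ a₁ a₂ m m₂ y₁ y =
        ℳ.pC1 c * ℳ.pC2 c₂ * ℳ.pM m m₂ a₁ a₂ c c₂ * F1 c m y₁ * F2 y := by
    intro c m y₁ y
    unfold TwoUnitFrontDoor.pV TwoUnitFrontDoor.joint
    simp only [hF1, hF2]
    rw [mul_assoc, Finset.sum_mul_sum, Finset.mul_sum]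
    refine Finset.sum_congr rfl fun u₁ _ => ?_
    rw [Finset.mul_sum]
    refine Finset.sum_congr rfl fun u₂ _ => ?_
    ring
  have hsumF1 : ∀ (c : C₁) (m : M₁), (∑ y₁, F1 c m y₁) = G1 c := by
    intro c m
    rw [hF1, hG1]
    simp only
    rw [Finset.sum_comm]
    refine Finset.sum_congr rfl fun u _ => ?_
    rw [← Finset.mul_sum, ℳ.pY1_sum, mul_one]
  have hsumF2 : (∑ y, F2 y) = G2 := by
    rw [hF2, hG2]
    simp only
    rw [Finset.sum_comm]
    refine Finset.sum_congr rfl fun u _ => ?_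
    rw [← Finset.mul_sum, ℳ.pY2_sum, mul_one]
  have hnum : ∀ (c : C₁) (m : M₁) (y : Y₂),
      (∑ y₁, ℳ.pV c c₂ a₁ a₂ m m₂ y₁ y) =
        ℳ.pC1 c * ℳ.pC2 c₂ * ℳ.pM m m₂ a₁ a₂ c c₂ * G1 c * F2 y := by
    intro c m y
    simp only [hfac]
    rw [key, hsumF1]
  have hden : ∀ (c : C₁) (m : M₁),
      (∑ y₁ : Y₁, ∑ y₂' : Y₂, ℳ.pV c c₂ a₁ a₂ m m₂ y₁ y₂') =
        ℳ.pC1 c * ℳ.pC2 c₂ * ℳ.pM m m₂ a₁ a₂ c c₂ * G1 c * G2 := by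
    intro c m
    have h1 : ∀ y₁ : Y₁, (∑ y₂' : Y₂, ℳ.pV c c₂ a₁ a₂ m m₂ y₁ y₂') =
        ℳ.pC1 c * ℳ.pC2 c₂ * ℳ.pM m m₂ a₁ a₂ c c₂ * F1 c m y₁ * G2 := by
      intro y₁
      simp only [hfac]
      rw [← Finset.mul_sum, hsumF2]
    simp only [h1]
    rw [key, hsumF1]
  have hG1pos : ∀ c, 0 < G1 c := fun c =>
    Finset.sum_pos (fun u _ => mul_pos (hU1 u) (hA1 a₁ c u)) Finset.univ_nonempty
  have hG2pos : 0 < G2 :=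
    Finset.sum_pos (fun u _ => mul_pos (hU2 u) (hA2 a₂ c₂ u)) Finset.univ_nonempty
  have hKpos : ∀ (c : C₁) (m : M₁),
      0 < ℳ.pC1 c * ℳ.pC2 c₂ * ℳ.pM m m₂ a₁ a₂ c c₂ * G1 c := fun c m =>
    mul_pos (mul_pos (mul_pos (hC1 c) (hC2 c₂)) (hM m m₂ a₁ a₂ c c₂)) (hG1pos c)
  set T : ℝ := ∑ c : C₁, ∑ m : M₁,
      ℳ.pC1 c * ℳ.pC2 c₂ * ℳ.pM m m₂ a₁ a₂ c c₂ * G1 c with hT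
  have hTpos : 0 < T :=
    Finset.sum_pos (fun c _ =>
      Finset.sum_pos (fun m _ => hKpos c m) Finset.univ_nonempty) Finset.univ_nonempty
  have hT1 : ∀ (B : ℝ), T * B = ∑ c : C₁, ∑ m : M₁,
      ℳ.pC1 c * ℳ.pC2 c₂ * ℳ.pM m m₂ a₁ a₂ c c₂ * G1 c * B := by
    intro B
    rw [hT, Finset.sum_mul]
    exact Finset.sum_congr rfl fun c _ => by rw [Finset.sum_mul]
  have hL : ℳ.pVy2Full y₂ a₁ a₂ m₁ m₂ c₁ c₂ = F2 y₂ / G2 := by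
    unfold TwoUnitFrontDoor.pVy2Full
    rw [hnum c₁ m₁ y₂, hden c₁ m₁]
    exact mul_div_mul_left _ _ (ne_of_gt (hKpos c₁ m₁))
  have hR : ℳ.pVy2 y₂ a₁ a₂ m₂ c₂ = F2 y₂ / G2 := by
    unfold TwoUnitFrontDoor.pVy2
    simp only [hnum, hden]
    rw [← hT1 (F2 y₂), ← hT1 G2]
    exact mul_div_mul_left _ _ (ne_of_gt hTpos)
  rw [hL, hR]
end
end

section
/- In the two-unit front-door network model with all kernels strictly positive, the observed margin satisfies the conditional independence Y₁ ⟂ (M₂, C₂) | (A₁, A₂, M₁, C₁): for all values, pV(y₁ | a₁, a₂, m₁, m₂, c₁, c₂) = pV(y₁ | a₁, a₂, m₁, c₁), where both sides are ratios of marginal sums of the observed margin pV. -/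
open scoped Classical

noncomputable section

/-- In the two-unit front-door network model with all kernels
strictly positive, the observed margin satisfies the conditional independence
`Y₁ ⟂ (M₂, C₂) | (A₁, A₂, M₁, C₁)`:
`pV(y₁ | a₁, a₂, m₁, m₂, c₁, c₂) = pV(y₁ | a₁, a₂, m₁, c₁)`. -/
theorem TwoUnitFrontDoor.y1_indep_m2c2
    {C₁ C₂ U₁ U₂ A₁ A₂ M₁ M₂ Y₁ Y₂ : Type}
    [Fintype C₁] [Fintype C₂] [Fintype U₁] [Fintype U₂] [Fintype A₁] [Fintype A₂]
    [Fintype M₁] [Fintype M₂] [Fintype Y₁] [Fintype Y₂]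
    [Nonempty C₁] [Nonempty C₂] [Nonempty U₁] [Nonempty U₂] [Nonempty A₁] [Nonempty A₂]
    [Nonempty M₁] [Nonempty M₂] [Nonempty Y₁] [Nonempty Y₂]
    (ℳ : TwoUnitFrontDoor C₁ C₂ U₁ U₂ A₁ A₂ M₁ M₂ Y₁ Y₂)
    (hpos : ℳ.StrictlyPositive)
    (y₁ : Y₁) (a₁ : A₁) (a₂ : A₂) (m₁ : M₁) (m₂ : M₂) (c₁ : C₁) (c₂ : C₂) :
    ℳ.pVy1Full y₁ a₁ a₂ m₁ m₂ c₁ c₂ = ℳ.pVy1 y₁ a₁ a₂ m₁ c₁ := by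
  obtain ⟨h1, h2, h3, h4, h5, h6, h7, h8, h9⟩ := hpos
  -- key factors
  set F : Y₁ → ℝ := fun y => ∑ u₁, ℳ.pU1 u₁ * ℳ.pA1 a₁ c₁ u₁ * ℳ.pY1 y c₁ u₁ m₁ a₂ with hF
  set G : C₂ → ℝ := fun c => ∑ u₂, ℳ.pU2 u₂ * ℳ.pA2 a₂ c u₂ with hG
  have hFpos : ∀ y, 0 < F y := fun y =>
    Finset.sum_pos (fun u _ => mul_pos (mul_pos (h3 u) (h5 _ _ _)) (h8 _ _ _ _ _))
      Finset.univ_nonempty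
  have hGpos : ∀ c, 0 < G c := fun c =>
    Finset.sum_pos (fun u _ => mul_pos (h4 u) (h6 _ _ _)) Finset.univ_nonempty
  -- the basic factorization of ∑ y₂, pV
  have key : ∀ (c : C₂) (m : M₂) (y : Y₁),
      ∑ y₂, ℳ.pV c₁ c a₁ a₂ m₁ m y y₂ =
        ℳ.pC1 c₁ * ℳ.pC2 c * ℳ.pM m₁ m a₁ a₂ c₁ c * F y * G c := by
    intro c m y
    simp only [TwoUnitFrontDoor.pV, TwoUnitFrontDoor.joint]
    rw [Finset.sum_comm]
    have step : ∀ u₁ : U₁, ∑ y₂ : Y₂, ∑ u₂ : U₂,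
        (ℳ.pC1 c₁ * ℳ.pC2 c * ℳ.pU1 u₁ * ℳ.pU2 u₂ * ℳ.pA1 a₁ c₁ u₁ *
          ℳ.pA2 a₂ c u₂ * ℳ.pM m₁ m a₁ a₂ c₁ c * ℳ.pY1 y c₁ u₁ m₁ a₂ *
          ℳ.pY2 y₂ c u₂ m a₁) =
        ∑ u₂ : U₂, ℳ.pC1 c₁ * ℳ.pC2 c * ℳ.pU1 u₁ * ℳ.pU2 u₂ * ℳ.pA1 a₁ c₁ u₁ *
          ℳ.pA2 a₂ c u₂ * ℳ.pM m₁ m a₁ a₂ c₁ c * ℳ.pY1 y c₁ u₁ m₁ a₂ := by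
      intro u₁
      rw [Finset.sum_comm]
      refine Finset.sum_congr rfl fun u₂ _ => ?_
      rw [← Finset.mul_sum, ℳ.pY2_sum, mul_one]
    simp only [step]
    rw [Finset.sum_comm]
    simp only [hF, hG, Finset.mul_sum, Finset.sum_mul]
    refine Finset.sum_congr rfl fun u₂ _ => Finset.sum_congr rfl fun u₁ _ => ?_
    ring
  clear_value F G
  -- derived quantities
  set SF : ℝ := ∑ y, F y with hSF
  have hSFpos : 0 < SF := Finset.sum_pos (fun y _ => hFpos y) Finset.univ_nonempty
  set K : ℝ := ∑ c : C₂, ℳ.pC2 c * G c * ∑ m : M₂, ℳ.pM m₁ m a₁ a₂ c₁ c with hK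
  have hKpos : 0 < K := by
    refine Finset.sum_pos (fun c _ => ?_) Finset.univ_nonempty
    exact mul_pos (mul_pos (h2 c) (hGpos c))
      (Finset.sum_pos (fun m _ => h7 _ _ _ _ _ _) Finset.univ_nonempty)
  clear_value SF K
  -- the four sums
  have hden1 : ∀ (c : C₂) (m : M₂), ∑ y : Y₁, ∑ y₂, ℳ.pV c₁ c a₁ a₂ m₁ m y y₂ =
      ℳ.pC1 c₁ * ℳ.pC2 c * ℳ.pM m₁ m a₁ a₂ c₁ c * SF * G c := by
    intro c m
    simp only [key, hSF, Finset.sum_mul, Finset.mul_sum]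
  have hnum2 : ∑ c : C₂, ∑ m : M₂, ∑ y₂, ℳ.pV c₁ c a₁ a₂ m₁ m y₁ y₂ =
      ℳ.pC1 c₁ * F y₁ * K := by
    simp only [key, hK, Finset.mul_sum]
    exact Finset.sum_congr rfl fun c _ => Finset.sum_congr rfl fun m _ => by ring
  have hden2 : ∑ c : C₂, ∑ m : M₂, ∑ y : Y₁, ∑ y₂, ℳ.pV c₁ c a₁ a₂ m₁ m y y₂ =
      ℳ.pC1 c₁ * SF * K := by
    simp only [hden1, hK, Finset.mul_sum]
    exact Finset.sum_congr rfl fun c _ => Finset.sum_congr rfl fun m _ => by ring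
  -- conclude
  have hC1 := h1 c₁
  have hC2 := h2 c₂
  have hM := h7 m₁ m₂ a₁ a₂ c₁ c₂
  have hGc := hGpos c₂
  have hFy := hFpos y₁
  rw [TwoUnitFrontDoor.pVy1Full, TwoUnitFrontDoor.pVy1, key, hden1, hnum2, hden2]
  rw [div_eq_div_iff (by positivity) (by positivity)]
  ring
end
end

section
/- In the two-unit front-door network model with all kernels strictly positive, the observed margin admits the segregated factorization, expressed entirely in observed conditionals: pV(c₁,c₂,a₁,a₂,m₁,m₂,y₁,y₂) = pV(c₁) · pV(c₂) · pV(a₁ | c₁) · pV(a₂ | c₂) · pV(m₁,m₂ | a₁,a₂,c₁,c₂) · pV(y₁ | a₁,a₂,m₁,c₁) · pV(y₂ | a₁,a₂,m₂,c₂), where each conditional is a ratio of marginal sums of pV. -/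
open scoped Classical

noncomputable section

namespace TwoUnitFrontDoor

section Aux

variable {C₁ C₂ U₁ U₂ A₁ A₂ M₁ M₂ Y₁ Y₂ : Type}
    [Fintype C₁] [Fintype C₂] [Fintype U₁] [Fintype U₂] [Fintype A₁] [Fintype A₂]
    [Fintype M₁] [Fintype M₂] [Fintype Y₁] [Fintype Y₂]
    [Nonempty C₁] [Nonempty C₂] [Nonempty U₁] [Nonempty U₂] [Nonempty A₁] [Nonempty A₂]
    [Nonempty M₁] [Nonempty M₂] [Nonempty Y₁] [Nonempty Y₂]
    (ℳ : TwoUnitFrontDoor C₁ C₂ U₁ U₂ A₁ A₂ M₁ M₂ Y₁ Y₂)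

/-- Auxiliary: `∑_{u₁} pU1 pA1`. -/
def auxG1 (a₁ : A₁) (c₁ : C₁) : ℝ := ∑ u₁, ℳ.pU1 u₁ * ℳ.pA1 a₁ c₁ u₁

def auxG2 (a₂ : A₂) (c₂ : C₂) : ℝ := ∑ u₂, ℳ.pU2 u₂ * ℳ.pA2 a₂ c₂ u₂

def auxF1 (y₁ : Y₁) (a₁ : A₁) (a₂ : A₂) (m₁ : M₁) (c₁ : C₁) : ℝ :=
  ∑ u₁, ℳ.pU1 u₁ * ℳ.pA1 a₁ c₁ u₁ * ℳ.pY1 y₁ c₁ u₁ m₁ a₂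

def auxF2 (y₂ : Y₂) (a₁ : A₁) (a₂ : A₂) (m₂ : M₂) (c₂ : C₂) : ℝ :=
  ∑ u₂, ℳ.pU2 u₂ * ℳ.pA2 a₂ c₂ u₂ * ℳ.pY2 y₂ c₂ u₂ m₂ a₁

def auxK1 (a₁ : A₁) (a₂ : A₂) (m₁ : M₁) (c₁ : C₁) : ℝ :=
  ∑ c₂, ℳ.pC2 c₂ * (∑ m₂, ℳ.pM m₁ m₂ a₁ a₂ c₁ c₂) * ℳ.auxG2 a₂ c₂

def auxK2 (a₁ : A₁) (a₂ : A₂) (m₂ : M₂) (c₂ : C₂) : ℝ :=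
  ∑ c₁, ℳ.pC1 c₁ * (∑ m₁, ℳ.pM m₁ m₂ a₁ a₂ c₁ c₂) * ℳ.auxG1 a₁ c₁

lemma pV_eq (c₁ : C₁) (c₂ : C₂) (a₁ : A₁) (a₂ : A₂) (m₁ : M₁) (m₂ : M₂) (y₁ : Y₁) (y₂ : Y₂) :
    ℳ.pV c₁ c₂ a₁ a₂ m₁ m₂ y₁ y₂ =
      ℳ.pC1 c₁ * ℳ.pC2 c₂ * ℳ.pM m₁ m₂ a₁ a₂ c₁ c₂ *
        ℳ.auxF1 y₁ a₁ a₂ m₁ c₁ * ℳ.auxF2 y₂ a₁ a₂ m₂ c₂ := by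
  simp only [pV, joint, auxF1, auxF2, Finset.mul_sum, Finset.sum_mul]
  rw [Finset.sum_comm]
  exact Finset.sum_congr rfl fun u₂ _ => Finset.sum_congr rfl fun u₁ _ => by ring

lemma sumY1_F1 (a₁ : A₁) (a₂ : A₂) (m₁ : M₁) (c₁ : C₁) :
    ∑ y₁, ℳ.auxF1 y₁ a₁ a₂ m₁ c₁ = ℳ.auxG1 a₁ c₁ := by
  simp only [auxF1, auxG1]
  rw [Finset.sum_comm]
  refine Finset.sum_congr rfl fun u₁ _ => ?_
  rw [← Finset.mul_sum, ℳ.pY1_sum, mul_one]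

lemma sumY2_F2 (a₁ : A₁) (a₂ : A₂) (m₂ : M₂) (c₂ : C₂) :
    ∑ y₂, ℳ.auxF2 y₂ a₁ a₂ m₂ c₂ = ℳ.auxG2 a₂ c₂ := by
  simp only [auxF2, auxG2]
  rw [Finset.sum_comm]
  refine Finset.sum_congr rfl fun u₂ _ => ?_
  rw [← Finset.mul_sum, ℳ.pY2_sum, mul_one]

lemma sumA1_G1 (c₁ : C₁) : ∑ a₁, ℳ.auxG1 a₁ c₁ = 1 := by
  simp only [auxG1]
  rw [Finset.sum_comm]
  simp only [← Finset.mul_sum]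
  simp [ℳ.pA1_sum, ℳ.pU1_sum]

lemma sumA2_G2 (c₂ : C₂) : ∑ a₂, ℳ.auxG2 a₂ c₂ = 1 := by
  simp only [auxG2]
  rw [Finset.sum_comm]
  simp only [← Finset.mul_sum]
  simp [ℳ.pA2_sum, ℳ.pU2_sum]


lemma auxK1_eq (a₁ : A₁) (a₂ : A₂) (m₁ : M₁) (c₁ : C₁) :
    ℳ.auxK1 a₁ a₂ m₁ c₁ =
      ∑ c₂, ∑ m₂, ℳ.pC2 c₂ * ℳ.auxG2 a₂ c₂ * ℳ.pM m₁ m₂ a₁ a₂ c₁ c₂ := by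
  simp only [auxK1]
  refine Finset.sum_congr rfl fun c₂ _ => ?_
  rw [show ℳ.pC2 c₂ * (∑ m₂, ℳ.pM m₁ m₂ a₁ a₂ c₁ c₂) * ℳ.auxG2 a₂ c₂
      = (ℳ.pC2 c₂ * ℳ.auxG2 a₂ c₂) * ∑ m₂, ℳ.pM m₁ m₂ a₁ a₂ c₁ c₂ from by ring,
    Finset.mul_sum]

lemma auxK2_eq (a₁ : A₁) (a₂ : A₂) (m₂ : M₂) (c₂ : C₂) :
    ℳ.auxK2 a₁ a₂ m₂ c₂ =
      ∑ c₁, ∑ m₁, ℳ.pC1 c₁ * ℳ.auxG1 a₁ c₁ * ℳ.pM m₁ m₂ a₁ a₂ c₁ c₂ := by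
  simp only [auxK2]
  refine Finset.sum_congr rfl fun c₁ _ => ?_
  rw [show ℳ.pC1 c₁ * (∑ m₁, ℳ.pM m₁ m₂ a₁ a₂ c₁ c₂) * ℳ.auxG1 a₁ c₁
      = (ℳ.pC1 c₁ * ℳ.auxG1 a₁ c₁) * ∑ m₁, ℳ.pM m₁ m₂ a₁ a₂ c₁ c₂ from by ring,
    Finset.mul_sum]

lemma sumYY (c₁ : C₁) (c₂ : C₂) (a₁ : A₁) (a₂ : A₂) (m₁ : M₁) (m₂ : M₂) :
    ∑ y₁, ∑ y₂, ℳ.pV c₁ c₂ a₁ a₂ m₁ m₂ y₁ y₂ =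
      ℳ.pC1 c₁ * ℳ.pC2 c₂ * ℳ.pM m₁ m₂ a₁ a₂ c₁ c₂ * ℳ.auxG1 a₁ c₁ * ℳ.auxG2 a₂ c₂ := by
  simp only [ℳ.pV_eq, ← Finset.mul_sum, ℳ.sumY2_F2]
  rw [← Finset.sum_mul, ← Finset.mul_sum, ℳ.sumY1_F1]

lemma sumY2_pV (c₁ : C₁) (c₂ : C₂) (a₁ : A₁) (a₂ : A₂) (m₁ : M₁) (m₂ : M₂) (y₁ : Y₁) :
    ∑ y₂, ℳ.pV c₁ c₂ a₁ a₂ m₁ m₂ y₁ y₂ =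
      ℳ.pC1 c₁ * ℳ.pC2 c₂ * ℳ.pM m₁ m₂ a₁ a₂ c₁ c₂ *
        ℳ.auxF1 y₁ a₁ a₂ m₁ c₁ * ℳ.auxG2 a₂ c₂ := by
  simp only [ℳ.pV_eq, ← Finset.mul_sum, ℳ.sumY2_F2]

lemma sumY1_pV (c₁ : C₁) (c₂ : C₂) (a₁ : A₁) (a₂ : A₂) (m₁ : M₁) (m₂ : M₂) (y₂ : Y₂) :
    ∑ y₁, ℳ.pV c₁ c₂ a₁ a₂ m₁ m₂ y₁ y₂ =
      ℳ.pC1 c₁ * ℳ.pC2 c₂ * ℳ.pM m₁ m₂ a₁ a₂ c₁ c₂ *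
        ℳ.auxG1 a₁ c₁ * ℳ.auxF2 y₂ a₁ a₂ m₂ c₂ := by
  simp only [ℳ.pV_eq]
  rw [← Finset.sum_mul, ← Finset.mul_sum, ℳ.sumY1_F1]

lemma sumMYY (c₁ : C₁) (c₂ : C₂) (a₁ : A₁) (a₂ : A₂) :
    ∑ m₁, ∑ m₂, ∑ y₁, ∑ y₂, ℳ.pV c₁ c₂ a₁ a₂ m₁ m₂ y₁ y₂ =
      ℳ.pC1 c₁ * ℳ.pC2 c₂ * ℳ.auxG1 a₁ c₁ * ℳ.auxG2 a₂ c₂ := by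
  have h : ∀ m₁ m₂, ∑ y₁, ∑ y₂, ℳ.pV c₁ c₂ a₁ a₂ m₁ m₂ y₁ y₂ =
      (ℳ.pC1 c₁ * ℳ.pC2 c₂ * ℳ.auxG1 a₁ c₁ * ℳ.auxG2 a₂ c₂) * ℳ.pM m₁ m₂ a₁ a₂ c₁ c₂ :=
    fun m₁ m₂ => by rw [ℳ.sumYY]; ring
  simp only [h, ← Finset.mul_sum, ℳ.pM_sum, mul_one]

lemma sumAMYY (c₁ : C₁) (c₂ : C₂) (a₁ : A₁) :
    ∑ a₂, ∑ m₁, ∑ m₂, ∑ y₁, ∑ y₂, ℳ.pV c₁ c₂ a₁ a₂ m₁ m₂ y₁ y₂ =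
      ℳ.pC1 c₁ * ℳ.pC2 c₂ * ℳ.auxG1 a₁ c₁ := by
  have h : ∀ a₂, ∑ m₁, ∑ m₂, ∑ y₁, ∑ y₂, ℳ.pV c₁ c₂ a₁ a₂ m₁ m₂ y₁ y₂ =
      (ℳ.pC1 c₁ * ℳ.pC2 c₂ * ℳ.auxG1 a₁ c₁) * ℳ.auxG2 a₂ c₂ :=
    fun a₂ => ℳ.sumMYY c₁ c₂ a₁ a₂
  simp only [h, ← Finset.mul_sum]
  rw [ℳ.sumA2_G2, mul_one]

lemma pVc1_eq (c₁ : C₁) : ℳ.pVc1 c₁ = ℳ.pC1 c₁ := by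
  simp only [pVc1]
  have h : ∀ c₂ a₁, ∑ a₂, ∑ m₁, ∑ m₂, ∑ y₁, ∑ y₂, ℳ.pV c₁ c₂ a₁ a₂ m₁ m₂ y₁ y₂ =
      ℳ.pC1 c₁ * (ℳ.pC2 c₂ * ℳ.auxG1 a₁ c₁) :=
    fun c₂ a₁ => by rw [ℳ.sumAMYY]; ring
  simp only [h, ← Finset.mul_sum, ℳ.sumA1_G1, mul_one, ℳ.pC2_sum]

lemma pVc2_eq (c₂ : C₂) : ℳ.pVc2 c₂ = ℳ.pC2 c₂ := by
  simp only [pVc2]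
  have h : ∀ c₁ a₁ a₂, ∑ m₁, ∑ m₂, ∑ y₁, ∑ y₂, ℳ.pV c₁ c₂ a₁ a₂ m₁ m₂ y₁ y₂ =
      ℳ.pC2 c₂ * (ℳ.pC1 c₁ * (ℳ.auxG1 a₁ c₁ * ℳ.auxG2 a₂ c₂)) :=
    fun c₁ a₁ a₂ => by rw [ℳ.sumMYY]; ring
  simp only [h, ← Finset.mul_sum, ℳ.sumA2_G2, mul_one, ℳ.sumA1_G1, ℳ.pC1_sum]

lemma pVa1_num (a₁ : A₁) (c₁ : C₁) :
    ∑ c₂, ∑ a₂, ∑ m₁, ∑ m₂, ∑ y₁, ∑ y₂, ℳ.pV c₁ c₂ a₁ a₂ m₁ m₂ y₁ y₂ =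
      ℳ.pC1 c₁ * ℳ.auxG1 a₁ c₁ := by
  have h : ∀ c₂, ∑ a₂, ∑ m₁, ∑ m₂, ∑ y₁, ∑ y₂, ℳ.pV c₁ c₂ a₁ a₂ m₁ m₂ y₁ y₂ =
      (ℳ.pC1 c₁ * ℳ.auxG1 a₁ c₁) * ℳ.pC2 c₂ :=
    fun c₂ => by rw [ℳ.sumAMYY]; ring
  simp only [h, ← Finset.mul_sum, ℳ.pC2_sum, mul_one]

lemma pVa2_num (a₂ : A₂) (c₂ : C₂) :
    ∑ c₁, ∑ a₁, ∑ m₁, ∑ m₂, ∑ y₁, ∑ y₂, ℳ.pV c₁ c₂ a₁ a₂ m₁ m₂ y₁ y₂ =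
      ℳ.pC2 c₂ * ℳ.auxG2 a₂ c₂ := by
  have h : ∀ c₁ a₁, ∑ m₁, ∑ m₂, ∑ y₁, ∑ y₂, ℳ.pV c₁ c₂ a₁ a₂ m₁ m₂ y₁ y₂ =
      (ℳ.pC2 c₂ * ℳ.auxG2 a₂ c₂) * (ℳ.pC1 c₁ * ℳ.auxG1 a₁ c₁) :=
    fun c₁ a₁ => by rw [ℳ.sumMYY]; ring
  simp only [h, ← Finset.mul_sum, ℳ.sumA1_G1, mul_one, ℳ.pC1_sum]

lemma pVy1_num (y₁ : Y₁) (a₁ : A₁) (a₂ : A₂) (m₁ : M₁) (c₁ : C₁) :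
    ∑ c₂, ∑ m₂, ∑ y₂, ℳ.pV c₁ c₂ a₁ a₂ m₁ m₂ y₁ y₂ =
      ℳ.pC1 c₁ * ℳ.auxF1 y₁ a₁ a₂ m₁ c₁ * ℳ.auxK1 a₁ a₂ m₁ c₁ := by
  have h : ∀ c₂ m₂, ∑ y₂, ℳ.pV c₁ c₂ a₁ a₂ m₁ m₂ y₁ y₂ =
      (ℳ.pC1 c₁ * ℳ.auxF1 y₁ a₁ a₂ m₁ c₁) *
        (ℳ.pC2 c₂ * ℳ.auxG2 a₂ c₂ * ℳ.pM m₁ m₂ a₁ a₂ c₁ c₂) :=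
    fun c₂ m₂ => by rw [ℳ.sumY2_pV]; ring
  simp only [h, ← Finset.mul_sum, auxK1]
  congr 1
  exact Finset.sum_congr rfl fun c₂ _ => by ring

lemma pVy1_den (a₁ : A₁) (a₂ : A₂) (m₁ : M₁) (c₁ : C₁) :
    ∑ c₂, ∑ m₂, ∑ y₁, ∑ y₂, ℳ.pV c₁ c₂ a₁ a₂ m₁ m₂ y₁ y₂ =
      ℳ.pC1 c₁ * ℳ.auxG1 a₁ c₁ * ℳ.auxK1 a₁ a₂ m₁ c₁ := by
  have h : ∀ c₂ m₂, ∑ y₁, ∑ y₂, ℳ.pV c₁ c₂ a₁ a₂ m₁ m₂ y₁ y₂ =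
      (ℳ.pC1 c₁ * ℳ.auxG1 a₁ c₁) *
        (ℳ.pC2 c₂ * ℳ.auxG2 a₂ c₂ * ℳ.pM m₁ m₂ a₁ a₂ c₁ c₂) :=
    fun c₂ m₂ => by rw [ℳ.sumYY]; ring
  simp only [h, ← Finset.mul_sum, auxK1]
  congr 1
  exact Finset.sum_congr rfl fun c₂ _ => by ring

lemma pVy2_num (y₂ : Y₂) (a₁ : A₁) (a₂ : A₂) (m₂ : M₂) (c₂ : C₂) :
    ∑ c₁, ∑ m₁, ∑ y₁, ℳ.pV c₁ c₂ a₁ a₂ m₁ m₂ y₁ y₂ =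
      ℳ.pC2 c₂ * ℳ.auxF2 y₂ a₁ a₂ m₂ c₂ * ℳ.auxK2 a₁ a₂ m₂ c₂ := by
  have h : ∀ c₁ m₁, ∑ y₁, ℳ.pV c₁ c₂ a₁ a₂ m₁ m₂ y₁ y₂ =
      (ℳ.pC2 c₂ * ℳ.auxF2 y₂ a₁ a₂ m₂ c₂) *
        (ℳ.pC1 c₁ * ℳ.auxG1 a₁ c₁ * ℳ.pM m₁ m₂ a₁ a₂ c₁ c₂) :=
    fun c₁ m₁ => by rw [ℳ.sumY1_pV]; ring
  simp only [h, ← Finset.mul_sum, auxK2]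
  congr 1
  exact Finset.sum_congr rfl fun c₁ _ => by ring

lemma pVy2_den (a₁ : A₁) (a₂ : A₂) (m₂ : M₂) (c₂ : C₂) :
    ∑ c₁, ∑ m₁, ∑ y₁, ∑ y₂, ℳ.pV c₁ c₂ a₁ a₂ m₁ m₂ y₁ y₂ =
      ℳ.pC2 c₂ * ℳ.auxG2 a₂ c₂ * ℳ.auxK2 a₁ a₂ m₂ c₂ := by
  have h : ∀ c₁ m₁, ∑ y₁, ∑ y₂, ℳ.pV c₁ c₂ a₁ a₂ m₁ m₂ y₁ y₂ =
      (ℳ.pC2 c₂ * ℳ.auxG2 a₂ c₂) *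
        (ℳ.pC1 c₁ * ℳ.auxG1 a₁ c₁ * ℳ.pM m₁ m₂ a₁ a₂ c₁ c₂) :=
    fun c₁ m₁ => by rw [ℳ.sumYY]; ring
  simp only [h, ← Finset.mul_sum, auxK2]
  congr 1
  exact Finset.sum_congr rfl fun c₁ _ => by ring


end Aux

end TwoUnitFrontDoor

/-- In the two-unit front-door network model with all kernels
strictly positive, the observed margin admits the segregated factorization,
expressed entirely in observed conditionals:
`pV = pV(c₁) pV(c₂) pV(a₁|c₁) pV(a₂|c₂) pV(m₁,m₂|a₁,a₂,c₁,c₂)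
      pV(y₁|a₁,a₂,m₁,c₁) pV(y₂|a₁,a₂,m₂,c₂)`. -/
theorem TwoUnitFrontDoor.observed_segregated_factorization
    {C₁ C₂ U₁ U₂ A₁ A₂ M₁ M₂ Y₁ Y₂ : Type}
    [Fintype C₁] [Fintype C₂] [Fintype U₁] [Fintype U₂] [Fintype A₁] [Fintype A₂]
    [Fintype M₁] [Fintype M₂] [Fintype Y₁] [Fintype Y₂]
    [Nonempty C₁] [Nonempty C₂] [Nonempty U₁] [Nonempty U₂] [Nonempty A₁] [Nonempty A₂]
    [Nonempty M₁] [Nonempty M₂] [Nonempty Y₁] [Nonempty Y₂]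
    (ℳ : TwoUnitFrontDoor C₁ C₂ U₁ U₂ A₁ A₂ M₁ M₂ Y₁ Y₂)
    (hpos : ℳ.StrictlyPositive)
    (c₁ : C₁) (c₂ : C₂) (a₁ : A₁) (a₂ : A₂) (m₁ : M₁) (m₂ : M₂) (y₁ : Y₁) (y₂ : Y₂) :
    ℳ.pV c₁ c₂ a₁ a₂ m₁ m₂ y₁ y₂ =
      ℳ.pVc1 c₁ * ℳ.pVc2 c₂ * ℳ.pVa1 a₁ c₁ * ℳ.pVa2 a₂ c₂ *
        ℳ.pVm m₁ m₂ a₁ a₂ c₁ c₂ * ℳ.pVy1 y₁ a₁ a₂ m₁ c₁ * ℳ.pVy2 y₂ a₁ a₂ m₂ c₂ := by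
  obtain ⟨hC1, hC2, hU1, hU2, hA1, hA2, hM, hY1, hY2⟩ := hpos
  have hG1 : ∀ (a₁ : A₁) (c₁ : C₁), 0 < ℳ.auxG1 a₁ c₁ := fun a₁ c₁ =>
    Finset.sum_pos (fun u₁ _ => mul_pos (hU1 u₁) (hA1 a₁ c₁ u₁)) Finset.univ_nonempty
  have hG2 : ∀ (a₂ : A₂) (c₂ : C₂), 0 < ℳ.auxG2 a₂ c₂ := fun a₂ c₂ =>
    Finset.sum_pos (fun u₂ _ => mul_pos (hU2 u₂) (hA2 a₂ c₂ u₂)) Finset.univ_nonempty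
  have hK1 : 0 < ℳ.auxK1 a₁ a₂ m₁ c₁ :=
    Finset.sum_pos (fun c₂ _ => mul_pos (mul_pos (hC2 c₂)
      (Finset.sum_pos (fun m₂ _ => hM m₁ m₂ a₁ a₂ c₁ c₂) Finset.univ_nonempty))
      (hG2 a₂ c₂)) Finset.univ_nonempty
  have hK2 : 0 < ℳ.auxK2 a₁ a₂ m₂ c₂ :=
    Finset.sum_pos (fun c₁ _ => mul_pos (mul_pos (hC1 c₁)
      (Finset.sum_pos (fun m₁ _ => hM m₁ m₂ a₁ a₂ c₁ c₂) Finset.univ_nonempty))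
      (hG1 a₁ c₁)) Finset.univ_nonempty
  have e1 : ℳ.pVc1 c₁ = ℳ.pC1 c₁ := ℳ.pVc1_eq c₁
  have e2 : ℳ.pVc2 c₂ = ℳ.pC2 c₂ := ℳ.pVc2_eq c₂
  have e3 : ℳ.pVa1 a₁ c₁ = ℳ.auxG1 a₁ c₁ := by
    simp only [pVa1, ℳ.pVa1_num, e1]
    rw [mul_div_cancel_left₀ _ (hC1 c₁).ne']
  have e4 : ℳ.pVa2 a₂ c₂ = ℳ.auxG2 a₂ c₂ := by
    simp only [pVa2, ℳ.pVa2_num, e2]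
    rw [mul_div_cancel_left₀ _ (hC2 c₂).ne']
  have e5 : ℳ.pVm m₁ m₂ a₁ a₂ c₁ c₂ = ℳ.pM m₁ m₂ a₁ a₂ c₁ c₂ := by
    simp only [pVm]
    rw [ℳ.sumMYY, ℳ.sumYY, div_eq_iff (mul_pos (mul_pos (mul_pos (hC1 c₁) (hC2 c₂))
      (hG1 a₁ c₁)) (hG2 a₂ c₂)).ne']
    ring
  have e6 : ℳ.pVy1 y₁ a₁ a₂ m₁ c₁ = ℳ.auxF1 y₁ a₁ a₂ m₁ c₁ / ℳ.auxG1 a₁ c₁ := by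
    simp only [pVy1, ℳ.pVy1_num, ℳ.pVy1_den]
    rw [div_eq_div_iff (mul_pos (mul_pos (hC1 c₁) (hG1 a₁ c₁)) hK1).ne' (hG1 a₁ c₁).ne']
    ring
  have e7 : ℳ.pVy2 y₂ a₁ a₂ m₂ c₂ = ℳ.auxF2 y₂ a₁ a₂ m₂ c₂ / ℳ.auxG2 a₂ c₂ := by
    simp only [pVy2, ℳ.pVy2_num, ℳ.pVy2_den]
    rw [div_eq_div_iff (mul_pos (mul_pos (hC2 c₂) (hG2 a₂ c₂)) hK2).ne' (hG2 a₂ c₂).ne']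
    ring
  rw [ℳ.pV_eq, e1, e2, e3, e4, e5, e6, e7]
  field_simp [(hG1 a₁ c₁).ne', (hG2 a₂ c₂).ne']
end
end

section
/- In the N-unit front-door network model with all kernels strictly positive, for every intervention value a = (a₁,…,a_N) and every outcome vector y = (y₁,…,y_N), the interventional distribution satisfies p(Y = y | do(a)) = Σ_{c,m} pV(m | a, c) · ∏_{i=1}^{N} [Σ_{α ∈ A} pV(y_i | a_{N_i}, α, m_i, c_i) · pV(α | c_i)] · ∏_{i=1}^{N} pV(c_i), where pV(y_i | a_{N_i}, α, m_i, c_i) denotes the observed conditional of Y_i given that the treatments of the neighbors of unit i equal a_{N_i}, the treatment of unit i equals α, M_i = m_i and C_i = c_i, and all conditionals are ratios of marginal sums of the observed margin pV. (Network generalization of equation (3), the identifying functional used in the experiments) -/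
open scoped Classical

noncomputable section

/-- The `N`-unit front-door network model over the social network `G`: finite
nonempty state spaces `C` (covariates), `U` (unobserved confounders), `A`
(treatments), `M` (mediators) and `Y` (outcomes); priors `pC`, `pU`; treatment
kernels `pA`; a joint mediator block kernel `pM`; and outcome kernels `pY i`
which depend on the treatment vector only through the neighbors of unit `i`.
All kernels are nonnegative and sum to 1 over their first argument. -/
structure FrontDoorNetwork (N : ℕ) (G : SimpleGraph (Fin N))
    (C U A M Y : Type) [Fintype C] [Fintype U] [Fintype A] [Fintype M] [Fintype Y]
    [Nonempty C] [Nonempty U] [Nonempty A] [Nonempty M] [Nonempty Y] where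
  pC : C → ℝ
  pU : U → ℝ
  pA : A → C → U → ℝ
  pM : (Fin N → M) → (Fin N → A) → (Fin N → C) → ℝ
  pY : Fin N → Y → C → U → M → (Fin N → A) → ℝ
  pC_nonneg : ∀ c, 0 ≤ pC c
  pC_sum : ∑ c : C, pC c = 1
  pU_nonneg : ∀ u, 0 ≤ pU u
  pU_sum : ∑ u : U, pU u = 1
  pA_nonneg : ∀ a c u, 0 ≤ pA a c u
  pA_sum : ∀ c u, ∑ a : A, pA a c u = 1
  pM_nonneg : ∀ m a c, 0 ≤ pM m a c
  pM_sum : ∀ a c, ∑ m : Fin N → M, pM m a c = 1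
  pY_nonneg : ∀ i y c u m a, 0 ≤ pY i y c u m a
  pY_sum : ∀ i c u m a, ∑ y : Y, pY i y c u m a = 1
  pY_nbr : ∀ i y c u m (a a' : Fin N → A), (∀ j, G.Adj i j → a j = a' j) →
    pY i y c u m a = pY i y c u m a'

namespace FrontDoorNetwork

variable {N : ℕ} {G : SimpleGraph (Fin N)} {C U A M Y : Type}
    [Fintype C] [Fintype U] [Fintype A] [Fintype M] [Fintype Y]
    [Nonempty C] [Nonempty U] [Nonempty A] [Nonempty M] [Nonempty Y]
    (ℳ : FrontDoorNetwork N G C U A M Y)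

/-- All kernels of the model are strictly positive. -/
def StrictlyPositive : Prop :=
  (∀ c, 0 < ℳ.pC c) ∧ (∀ u, 0 < ℳ.pU u) ∧ (∀ a c u, 0 < ℳ.pA a c u) ∧
  (∀ m a c, 0 < ℳ.pM m a c) ∧ (∀ i y c u m a, 0 < ℳ.pY i y c u m a)

/-- The full joint distribution of the model. -/
def joint (c : Fin N → C) (u : Fin N → U) (a : Fin N → A) (m : Fin N → M)
    (y : Fin N → Y) : ℝ :=
  (∏ i, ℳ.pC (c i) * ℳ.pU (u i) * ℳ.pA (a i) (c i) (u i)) * ℳ.pM m a c *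
    ∏ i, ℳ.pY i (y i) (c i) (u i) (m i) a

/-- The observed margin `pV`, summing out the unobserved confounders. -/
def pV (c : Fin N → C) (a : Fin N → A) (m : Fin N → M) (y : Fin N → Y) : ℝ :=
  ∑ u : Fin N → U, ℳ.joint c u a m y

/-- The observed marginal `pV(a, c)`. -/
def pVac (c : Fin N → C) (a : Fin N → A) : ℝ :=
  ∑ m : Fin N → M, ∑ y : Fin N → Y, ℳ.pV c a m y

/-- The observed conditional `pV(m | a, c)` of the mediator block. -/
def pVm (m : Fin N → M) (a : Fin N → A) (c : Fin N → C) : ℝ :=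
  (∑ y : Fin N → Y, ℳ.pV c a m y) / ℳ.pVac c a

/-- The observed marginal `pV(C_i = cᵢ)` of a single unit's covariate. -/
def pVci (i : Fin N) (cᵢ : C) : ℝ :=
  ∑ c : Fin N → C, ∑ a : Fin N → A, ∑ m : Fin N → M, ∑ y : Fin N → Y,
    if c i = cᵢ then ℳ.pV c a m y else 0

/-- The observed conditional `pV(A_i = α | C_i = cᵢ)` of a single unit's
treatment given its own covariate. -/
def pVai (i : Fin N) (α : A) (cᵢ : C) : ℝ :=
  (∑ c : Fin N → C, ∑ a : Fin N → A, ∑ m : Fin N → M, ∑ y : Fin N → Y,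
    if c i = cᵢ ∧ a i = α then ℳ.pV c a m y else 0) / ℳ.pVci i cᵢ

/-- The observed conditional `pV(Y_i = yᵢ | A_{N_i} = a_{N_i}, A_i = α,
M_i = mᵢ, C_i = cᵢ)`: the outcome of unit `i` conditioned on the treatments
of the neighbors of `i` (as recorded in the vector `a`), its own treatment,
its own mediator and its own covariate. -/
def pVyi (i : Fin N) (yᵢ : Y) (a : Fin N → A) (α : A) (mᵢ : M) (cᵢ : C) : ℝ :=
  (∑ c : Fin N → C, ∑ a' : Fin N → A, ∑ m : Fin N → M, ∑ y : Fin N → Y,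
    if c i = cᵢ ∧ a' i = α ∧ (∀ j, G.Adj i j → a' j = a j) ∧ m i = mᵢ ∧ y i = yᵢ
    then ℳ.pV c a' m y else 0) /
  (∑ c : Fin N → C, ∑ a' : Fin N → A, ∑ m : Fin N → M, ∑ y : Fin N → Y,
    if c i = cᵢ ∧ a' i = α ∧ (∀ j, G.Adj i j → a' j = a j) ∧ m i = mᵢ
    then ℳ.pV c a' m y else 0)

/-- The interventional distribution `p(Y = y | do(A = a))` given by the
chain-graph g-formula, marginalized over `c`, `u` and `m`. -/
def doY (y : Fin N → Y) (a : Fin N → A) : ℝ :=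
  ∑ c : Fin N → C, ∑ u : Fin N → U, ∑ m : Fin N → M,
    (∏ i, ℳ.pC (c i) * ℳ.pU (u i)) * ℳ.pM m a c *
      ∏ i, ℳ.pY i (y i) (c i) (u i) (m i) a

end FrontDoorNetwork

section Helpers

lemma sum_if_const' {β : Type*} {P : Prop} [Decidable P] (s : Finset β) (f : β → ℝ) :
    (∑ x ∈ s, if P then f x else 0) = if P then ∑ x ∈ s, f x else 0 := by
  split_ifs <;> simp

lemma sum_fn_prod {ι X : Type*} [Fintype ι] [DecidableEq ι] [Fintype X] (f : ι → X → ℝ) :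
    ∑ g : ι → X, ∏ i, f i (g i) = ∏ i, ∑ x, f i x := by
  rw [Finset.prod_univ_sum, Fintype.piFinset_univ]

lemma sum_fn_prod_single {ι X : Type*} [Fintype ι] [DecidableEq ι] [Fintype X] [DecidableEq X]
    (i : ι) (x₀ : X) (f : ι → X → ℝ) :
    (∑ g : ι → X, if g i = x₀ then ∏ j, f j (g j) else 0)
      = f i x₀ * ∏ j ∈ ({i}ᶜ : Finset ι), ∑ x, f j x := by
  have h : ∀ g : ι → X,
      (if g i = x₀ then ∏ j, f j (g j) else 0)
        = ∏ j, (if j = i then (if g j = x₀ then f j (g j) else 0) else f j (g j)) := by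
    intro g
    by_cases hg : g i = x₀
    · simp only [hg, if_pos]
      exact (Finset.prod_congr rfl fun j _ => by split_ifs with h1 h2 <;> simp_all).symm
    · rw [if_neg hg]
      exact (Finset.prod_eq_zero (Finset.mem_univ i) (by simp [hg])).symm
  simp_rw [h]
  rw [sum_fn_prod (fun j x => if j = i then (if x = x₀ then f j x else 0) else f j x)]
  rw [← Finset.prod_compl_mul_prod ({i} : Finset ι), Finset.prod_singleton, mul_comm]
  congr 1
  · simp
  · exact Finset.prod_congr rfl fun j hj => by
      simp only [Finset.mem_compl, Finset.mem_singleton] at hj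
      simp [hj]

end Helpers

namespace FrontDoorNetwork

variable {N : ℕ} {G : SimpleGraph (Fin N)} {C U A M Y : Type}
    [Fintype C] [Fintype U] [Fintype A] [Fintype M] [Fintype Y]
    [Nonempty C] [Nonempty U] [Nonempty A] [Nonempty M] [Nonempty Y]
    (ℳ : FrontDoorNetwork N G C U A M Y)

/-- `rr c α = p(A = α | C = c)` marginalizing the confounder. -/
def rr (c : C) (α : A) : ℝ := ∑ u : U, ℳ.pU u * ℳ.pA α c u

lemma rr_pos (c : C) (α : A) (hpos : ℳ.StrictlyPositive) : 0 < ℳ.rr c α :=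
  Finset.sum_pos (fun u _ => mul_pos (hpos.2.1 u) (hpos.2.2.1 α c u))
    Finset.univ_nonempty

lemma rr_nonneg (c : C) (α : A) : 0 ≤ ℳ.rr c α :=
  Finset.sum_nonneg fun u _ => mul_nonneg (ℳ.pU_nonneg u) (ℳ.pA_nonneg α c u)

lemma rr_sum (c : C) : ∑ α : A, ℳ.rr c α = 1 := by
  unfold rr
  rw [Finset.sum_comm]
  simp_rw [← Finset.mul_sum, ℳ.pA_sum, mul_one, ℳ.pU_sum]

lemma pV_eq (c : Fin N → C) (a : Fin N → A) (m : Fin N → M) (y : Fin N → Y) :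
    ℳ.pV c a m y = (∏ i, ℳ.pC (c i)) * ℳ.pM m a c *
      ∏ i, ∑ u : U, ℳ.pU u * ℳ.pA (a i) (c i) u * ℳ.pY i (y i) (c i) u (m i) a := by
  unfold pV joint
  have h : ∀ u : Fin N → U,
      (∏ i, ℳ.pC (c i) * ℳ.pU (u i) * ℳ.pA (a i) (c i) (u i)) * ℳ.pM m a c *
        ∏ i, ℳ.pY i (y i) (c i) (u i) (m i) a
      = (∏ i, ℳ.pC (c i)) * ℳ.pM m a c *
        ∏ i, (ℳ.pU (u i) * ℳ.pA (a i) (c i) (u i) * ℳ.pY i (y i) (c i) (u i) (m i) a) := by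
    intro u
    simp only [Finset.prod_mul_distrib]
    ring
  simp_rw [h]
  rw [← Finset.mul_sum,
    sum_fn_prod (fun i u => ℳ.pU u * ℳ.pA (a i) (c i) u * ℳ.pY i (y i) (c i) u (m i) a)]

lemma sum_y_pV (c : Fin N → C) (a : Fin N → A) (m : Fin N → M) :
    ∑ y : Fin N → Y, ℳ.pV c a m y
      = (∏ i, ℳ.pC (c i)) * ℳ.pM m a c * ∏ i, ℳ.rr (c i) (a i) := by
  simp_rw [pV_eq]
  rw [← Finset.mul_sum,
    sum_fn_prod (fun i yy => ∑ u : U, ℳ.pU u * ℳ.pA (a i) (c i) u * ℳ.pY i yy (c i) u (m i) a)]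
  congr 1
  refine Finset.prod_congr rfl fun i _ => ?_
  rw [Finset.sum_comm]
  unfold rr
  refine Finset.sum_congr rfl fun u _ => ?_
  rw [← Finset.mul_sum, ℳ.pY_sum, mul_one]

lemma pVac_eq (c : Fin N → C) (a : Fin N → A) :
    ℳ.pVac c a = (∏ i, ℳ.pC (c i)) * ∏ i, ℳ.rr (c i) (a i) := by
  unfold pVac
  simp_rw [sum_y_pV]
  have h : ∀ m : Fin N → M,
      (∏ i, ℳ.pC (c i)) * ℳ.pM m a c * ∏ i, ℳ.rr (c i) (a i)
      = ((∏ i, ℳ.pC (c i)) * ∏ i, ℳ.rr (c i) (a i)) * ℳ.pM m a c := fun m => by ring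
  simp_rw [h]
  rw [← Finset.mul_sum, ℳ.pM_sum, mul_one]

lemma pVac_pos (hpos : ℳ.StrictlyPositive) (c : Fin N → C) (a : Fin N → A) :
    0 < ℳ.pVac c a := by
  rw [pVac_eq]
  exact mul_pos (Finset.prod_pos fun i _ => hpos.1 (c i))
    (Finset.prod_pos fun i _ => ℳ.rr_pos (c i) (a i) hpos)

lemma pVm_eq (hpos : ℳ.StrictlyPositive) (m : Fin N → M) (a : Fin N → A) (c : Fin N → C) :
    ℳ.pVm m a c = ℳ.pM m a c := by
  unfold pVm
  have hK : (∏ i, ℳ.pC (c i)) * ∏ i, ℳ.rr (c i) (a i) ≠ 0 :=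
    ne_of_gt (mul_pos (Finset.prod_pos fun i _ => hpos.1 (c i))
      (Finset.prod_pos fun i _ => ℳ.rr_pos (c i) (a i) hpos))
  rw [sum_y_pV, pVac_eq,
    show (∏ i, ℳ.pC (c i)) * ℳ.pM m a c * ∏ i, ℳ.rr (c i) (a i)
      = ℳ.pM m a c * ((∏ i, ℳ.pC (c i)) * ∏ i, ℳ.rr (c i) (a i)) by ring,
    mul_div_assoc, div_self hK, mul_one]

lemma sum_amy (c : Fin N → C) :
    ∑ a : Fin N → A, ∑ m : Fin N → M, ∑ y : Fin N → Y, ℳ.pV c a m y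
      = ∏ j, ℳ.pC (c j) := by
  have h : ∀ a : Fin N → A,
      ∑ m : Fin N → M, ∑ y : Fin N → Y, ℳ.pV c a m y = ℳ.pVac c a := fun a => rfl
  simp_rw [h, pVac_eq, ← Finset.mul_sum,
    sum_fn_prod (fun j α => ℳ.rr (c j) α)]
  simp_rw [rr_sum]
  simp

lemma pVci_eq (i : Fin N) (cᵢ : C) : ℳ.pVci i cᵢ = ℳ.pC cᵢ := by
  unfold pVci
  simp_rw [sum_if_const', sum_amy]
  rw [sum_fn_prod_single i cᵢ (fun _ x => ℳ.pC x)]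
  simp [ℳ.pC_sum]

lemma pVai_eq (hpos : ℳ.StrictlyPositive) (i : Fin N) (α : A) (cᵢ : C) :
    ℳ.pVai i α cᵢ = ℳ.rr cᵢ α := by
  unfold pVai
  have h1 : ∀ (c : Fin N → C) (a : Fin N → A),
      ∑ m : Fin N → M, ∑ y : Fin N → Y,
        (if c i = cᵢ ∧ a i = α then ℳ.pV c a m y else 0)
      = if c i = cᵢ ∧ a i = α then (∏ j, ℳ.pC (c j)) * ∏ j, ℳ.rr (c j) (a j) else 0 := by
    intro c a
    simp_rw [sum_if_const']
    congr 1
    exact (pVac_eq ℳ c a : ℳ.pVac c a = _)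
  simp_rw [h1]
  have h2 : ∀ (c : Fin N → C) (a : Fin N → A),
      (if c i = cᵢ ∧ a i = α then (∏ j, ℳ.pC (c j)) * ∏ j, ℳ.rr (c j) (a j) else 0)
      = (if c i = cᵢ then (1:ℝ) else 0) * (∏ j, ℳ.pC (c j)) *
          (if a i = α then ∏ j, ℳ.rr (c j) (a j) else 0) := by
    intro c a
    split_ifs with h ha hc <;> simp_all
  simp_rw [h2]
  have h3 : ∀ c : Fin N → C,
      ∑ a : Fin N → A, (if c i = cᵢ then (1:ℝ) else 0) * (∏ j, ℳ.pC (c j)) *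
          (if a i = α then ∏ j, ℳ.rr (c j) (a j) else 0)
      = (if c i = cᵢ then (1:ℝ) else 0) * (∏ j, ℳ.pC (c j)) * ℳ.rr (c i) α := by
    intro c
    rw [← Finset.mul_sum, sum_fn_prod_single i α (fun j x => ℳ.rr (c j) x)]
    simp_rw [rr_sum]
    simp
  simp_rw [h3]
  have h4 : ∀ c : Fin N → C,
      (if c i = cᵢ then (1:ℝ) else 0) * (∏ j, ℳ.pC (c j)) * ℳ.rr (c i) α
      = ℳ.rr cᵢ α * (if c i = cᵢ then ∏ j, ℳ.pC (c j) else 0) := by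
    intro c
    split_ifs with h
    · rw [h]; ring
    · ring
  simp_rw [h4]
  rw [← Finset.mul_sum, sum_fn_prod_single i cᵢ (fun _ x => ℳ.pC x), pVci_eq]
  simp only [ℳ.pC_sum, Finset.prod_const_one, mul_one]
  rw [mul_div_assoc, div_self (ne_of_gt (hpos.1 cᵢ)), mul_one]


lemma sum_y_pV_single (i : Fin N) (yᵢ : Y) (c : Fin N → C) (a' : Fin N → A) (m : Fin N → M) :
    (∑ y : Fin N → Y, if y i = yᵢ then ℳ.pV c a' m y else 0)
      = (∏ j, ℳ.pC (c j)) * ℳ.pM m a' c *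
        ((∑ u : U, ℳ.pU u * ℳ.pA (a' i) (c i) u * ℳ.pY i yᵢ (c i) u (m i) a') *
          ∏ j ∈ ({i}ᶜ : Finset (Fin N)), ℳ.rr (c j) (a' j)) := by
  simp_rw [pV_eq]
  have h : ∀ y : Fin N → Y,
      (if y i = yᵢ then (∏ j, ℳ.pC (c j)) * ℳ.pM m a' c *
          ∏ j, ∑ u : U, ℳ.pU u * ℳ.pA (a' j) (c j) u * ℳ.pY j (y j) (c j) u (m j) a' else 0)
      = (∏ j, ℳ.pC (c j)) * ℳ.pM m a' c *
          (if y i = yᵢ then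
            ∏ j, ∑ u : U, ℳ.pU u * ℳ.pA (a' j) (c j) u * ℳ.pY j (y j) (c j) u (m j) a'
           else 0) := by
    intro y; split_ifs <;> ring
  simp_rw [h]
  rw [← Finset.mul_sum,
    sum_fn_prod_single i yᵢ
      (fun j yy => ∑ u : U, ℳ.pU u * ℳ.pA (a' j) (c j) u * ℳ.pY j yy (c j) u (m j) a')]
  congr 2
  refine Finset.prod_congr rfl fun j _ => ?_
  rw [Finset.sum_comm]
  unfold rr
  refine Finset.sum_congr rfl fun u _ => ?_
  rw [← Finset.mul_sum, ℳ.pY_sum, mul_one]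



/-- auxiliary: the common factor in numerator and denominator of `pVyi`. -/
def fdBase (i : Fin N) (c : Fin N → C) (a' : Fin N → A) (m : Fin N → M) : ℝ :=
  (∏ j, ℳ.pC (c j)) * ℳ.pM m a' c * ∏ j ∈ ({i}ᶜ : Finset (Fin N)), ℳ.rr (c j) (a' j)

lemma fdBase_pos (hpos : ℳ.StrictlyPositive) (i : Fin N) (c : Fin N → C)
    (a' : Fin N → A) (m : Fin N → M) : 0 < ℳ.fdBase i c a' m :=
  mul_pos (mul_pos (Finset.prod_pos fun j _ => hpos.1 (c j)) (hpos.2.2.2.1 m a' c))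
    (Finset.prod_pos fun j _ => ℳ.rr_pos (c j) (a' j) hpos)

lemma pVyi_eq (hpos : ℳ.StrictlyPositive) (i : Fin N) (yᵢ : Y) (a : Fin N → A)
    (α : A) (mᵢ : M) (cᵢ : C) :
    ℳ.pVyi i yᵢ a α mᵢ cᵢ
      = (∑ u : U, ℳ.pU u * ℳ.pA α cᵢ u * ℳ.pY i yᵢ cᵢ u mᵢ a) / ℳ.rr cᵢ α := by
  classical
  set s : ℝ := ∑ u : U, ℳ.pU u * ℳ.pA α cᵢ u * ℳ.pY i yᵢ cᵢ u mᵢ a with hs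
  have hnum : ∀ (c : Fin N → C) (a' : Fin N → A) (m : Fin N → M),
      (∑ y : Fin N → Y,
        if c i = cᵢ ∧ a' i = α ∧ (∀ j, G.Adj i j → a' j = a j) ∧ m i = mᵢ ∧ y i = yᵢ
        then ℳ.pV c a' m y else 0)
      = if c i = cᵢ ∧ a' i = α ∧ (∀ j, G.Adj i j → a' j = a j) ∧ m i = mᵢ
        then s * ℳ.fdBase i c a' m else 0 := by
    intro c a' m
    by_cases hP : c i = cᵢ ∧ a' i = α ∧ (∀ j, G.Adj i j → a' j = a j) ∧ m i = mᵢ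
    · obtain ⟨h1, h2, h3, h4⟩ := hP
      rw [if_pos ⟨h1, h2, h3, h4⟩]
      have hc : ∀ y : Fin N → Y,
          (c i = cᵢ ∧ a' i = α ∧ (∀ j, G.Adj i j → a' j = a j) ∧ m i = mᵢ ∧ y i = yᵢ)
            ↔ (y i = yᵢ) := by
        intro y
        exact ⟨fun h => h.2.2.2.2, fun h => ⟨h1, h2, h3, h4, h⟩⟩
      simp_rw [hc]
      rw [sum_y_pV_single]
      have hq : (∑ u : U, ℳ.pU u * ℳ.pA (a' i) (c i) u * ℳ.pY i yᵢ (c i) u (m i) a') = s := by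
        rw [hs]
        refine Finset.sum_congr rfl fun u _ => ?_
        rw [h1, h2, h4, ℳ.pY_nbr i yᵢ cᵢ u mᵢ a' a (fun j hj => h3 j hj)]
      rw [hq]
      simp only [fdBase]
      ring
    · rw [if_neg hP]
      refine Finset.sum_eq_zero fun y _ => ?_
      rw [if_neg]
      exact fun h => hP ⟨h.1, h.2.1, h.2.2.1, h.2.2.2.1⟩
  have hden : ∀ (c : Fin N → C) (a' : Fin N → A) (m : Fin N → M),
      (∑ y : Fin N → Y,
        if c i = cᵢ ∧ a' i = α ∧ (∀ j, G.Adj i j → a' j = a j) ∧ m i = mᵢ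
        then ℳ.pV c a' m y else 0)
      = if c i = cᵢ ∧ a' i = α ∧ (∀ j, G.Adj i j → a' j = a j) ∧ m i = mᵢ
        then ℳ.rr cᵢ α * ℳ.fdBase i c a' m else 0 := by
    intro c a' m
    rw [sum_if_const']
    by_cases hP : c i = cᵢ ∧ a' i = α ∧ (∀ j, G.Adj i j → a' j = a j) ∧ m i = mᵢ
    · obtain ⟨h1, h2, h3, h4⟩ := hP
      rw [if_pos ⟨h1, h2, h3, h4⟩, if_pos ⟨h1, h2, h3, h4⟩, sum_y_pV]
      have hsplit : (∏ j, ℳ.rr (c j) (a' j))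
          = ℳ.rr (c i) (a' i) * ∏ j ∈ ({i}ᶜ : Finset (Fin N)), ℳ.rr (c j) (a' j) := by
        rw [← Finset.prod_compl_mul_prod ({i} : Finset (Fin N))
          (f := fun j => ℳ.rr (c j) (a' j)), Finset.prod_singleton]
        ring
      rw [hsplit, h1, h2]
      simp only [fdBase]
      ring
    · rw [if_neg hP, if_neg hP]
  unfold pVyi
  simp_rw [hnum, hden]
  have hfacs : ∀ (P : Prop) [Decidable P] (c : Fin N → C) (a' : Fin N → A) (m : Fin N → M),
      (if P then s * ℳ.fdBase i c a' m else 0) = s * (if P then ℳ.fdBase i c a' m else 0) := by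
    intro P _ c a' m; split_ifs <;> ring
  have hfacr : ∀ (P : Prop) [Decidable P] (c : Fin N → C) (a' : Fin N → A) (m : Fin N → M),
      (if P then ℳ.rr cᵢ α * ℳ.fdBase i c a' m else 0)
        = ℳ.rr cᵢ α * (if P then ℳ.fdBase i c a' m else 0) := by
    intro P _ c a' m; split_ifs <;> ring
  simp_rw [hfacs, hfacr, ← Finset.mul_sum]
  set T : ℝ := ∑ c : Fin N → C, ∑ a' : Fin N → A, ∑ m : Fin N → M,
      if c i = cᵢ ∧ a' i = α ∧ (∀ j, G.Adj i j → a' j = a j) ∧ m i = mᵢ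
      then ℳ.fdBase i c a' m else 0 with hT
  have hnn0 : ∀ (c : Fin N → C) (a' : Fin N → A) (m : Fin N → M),
      0 ≤ (if c i = cᵢ ∧ a' i = α ∧ (∀ j, G.Adj i j → a' j = a j) ∧ m i = mᵢ
        then ℳ.fdBase i c a' m else 0) := by
    intro c a' m
    split_ifs with h
    · exact (ℳ.fdBase_pos hpos i c a' m).le
    · exact le_rfl
  have hTpos : 0 < T := by
    set c₀ : Fin N → C := Function.update (fun _ => Classical.arbitrary C) i cᵢ with hc₀
    set a₀ : Fin N → A := Function.update a i α with ha₀
    set m₀ : Fin N → M := Function.update (fun _ => Classical.arbitrary M) i mᵢ with hm₀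
    have hPw : c₀ i = cᵢ ∧ a₀ i = α ∧ (∀ j, G.Adj i j → a₀ j = a j) ∧ m₀ i = mᵢ := by
      refine ⟨?_, ?_, fun j hj => ?_, ?_⟩
      · simp [hc₀]
      · simp [ha₀]
      · simp [ha₀, Function.update_of_ne hj.ne']
      · simp [hm₀]
    rw [hT]
    refine Finset.sum_pos' (fun c _ => Finset.sum_nonneg fun a' _ =>
      Finset.sum_nonneg fun m _ => hnn0 c a' m) ⟨c₀, Finset.mem_univ _, ?_⟩
    refine Finset.sum_pos' (fun a' _ => Finset.sum_nonneg fun m _ => hnn0 c₀ a' m)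
      ⟨a₀, Finset.mem_univ _, ?_⟩
    refine Finset.sum_pos' (fun m _ => hnn0 c₀ a₀ m) ⟨m₀, Finset.mem_univ _, ?_⟩
    rw [if_pos hPw]
    exact ℳ.fdBase_pos hpos i c₀ a₀ m₀
  rw [mul_div_mul_right _ _ (ne_of_gt hTpos)]

end FrontDoorNetwork


/-- **network generalization of equation (3).** In the `N`-unit
front-door network model with all kernels strictly positive, for every
intervention value `a` and every outcome vector `y`,
`p(Y = y | do(a)) = Σ_{c,m} pV(m | a, c) ·
  ∏_i [Σ_{α} pV(y_i | a_{N_i}, α, m_i, c_i) · pV(α | c_i)] · ∏_i pV(c_i)`,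
where all conditionals on the right-hand side are ratios of marginal sums of
the observed margin `pV`. -/
theorem FrontDoorNetwork.network_frontdoor_identification
    {N : ℕ} {G : SimpleGraph (Fin N)} {C U A M Y : Type}
    [Fintype C] [Fintype U] [Fintype A] [Fintype M] [Fintype Y]
    [Nonempty C] [Nonempty U] [Nonempty A] [Nonempty M] [Nonempty Y]
    (ℳ : FrontDoorNetwork N G C U A M Y)
    (hpos : ℳ.StrictlyPositive)
    (a : Fin N → A) (y : Fin N → Y) :
    ℳ.doY y a =
      ∑ c : Fin N → C, ∑ m : Fin N → M,
        ℳ.pVm m a c *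
          (∏ i, ∑ α : A, ℳ.pVyi i (y i) a α (m i) (c i) * ℳ.pVai i α (c i)) *
          ∏ i, ℳ.pVci i (c i) := by
  simp_rw [ℳ.pVm_eq hpos, ℳ.pVci_eq, ℳ.pVai_eq hpos, ℳ.pVyi_eq hpos]
  have h1 : ∀ (c : Fin N → C) (m : Fin N → M) (i : Fin N) (α : A),
      (∑ u : U, ℳ.pU u * ℳ.pA α (c i) u * ℳ.pY i (y i) (c i) u (m i) a) / ℳ.rr (c i) α
        * ℳ.rr (c i) α
      = ∑ u : U, ℳ.pU u * ℳ.pA α (c i) u * ℳ.pY i (y i) (c i) u (m i) a :=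
    fun c m i α => div_mul_cancel₀ _ (ne_of_gt (ℳ.rr_pos (c i) α hpos))
  simp_rw [h1]
  have h2 : ∀ (c : Fin N → C) (m : Fin N → M) (i : Fin N),
      ∑ α : A, ∑ u : U, ℳ.pU u * ℳ.pA α (c i) u * ℳ.pY i (y i) (c i) u (m i) a
      = ∑ u : U, ℳ.pU u * ℳ.pY i (y i) (c i) u (m i) a := by
    intro c m i
    rw [Finset.sum_comm]
    refine Finset.sum_congr rfl fun u _ => ?_
    have h3 : ∀ α : A, ℳ.pU u * ℳ.pA α (c i) u * ℳ.pY i (y i) (c i) u (m i) a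
        = ℳ.pA α (c i) u * (ℳ.pU u * ℳ.pY i (y i) (c i) u (m i) a) := fun α => by ring
    simp_rw [h3]
    rw [← Finset.sum_mul, ℳ.pA_sum, one_mul]
  simp_rw [h2]
  unfold FrontDoorNetwork.doY
  refine Finset.sum_congr rfl fun c _ => ?_
  rw [Finset.sum_comm]
  refine Finset.sum_congr rfl fun m _ => ?_
  have h4 : ∀ u : Fin N → U,
      (∏ i, ℳ.pC (c i) * ℳ.pU (u i)) * ℳ.pM m a c *
          ∏ i, ℳ.pY i (y i) (c i) (u i) (m i) a
      = ((∏ i, ℳ.pC (c i)) * ℳ.pM m a c) *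
          ∏ i, (ℳ.pU (u i) * ℳ.pY i (y i) (c i) (u i) (m i) a) := by
    intro u
    simp only [Finset.prod_mul_distrib]
    ring
  simp_rw [h4]
  rw [← Finset.mul_sum,
    sum_fn_prod (fun i u => ℳ.pU u * ℳ.pY i (y i) (c i) u (m i) a)]
  ring
end
end

section
/- In the dyad interference model, the unit-specific interventional distributions are identified by observed conditionals despite the unobserved confounders U₁, U₂: for every a₁ with pV(a₁) > 0 and every y₂, p(Y₂ = y₂ | do(a₁)) = pV(y₂, a₁)/pV(a₁); and symmetrically, for every a₂ with pV(a₂) > 0 and every y₁, p(Y₁ = y₁ | do(a₂)) = pV(y₁, a₂)/pV(a₂). -/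
open scoped Classical

noncomputable section

/-- The dyad interference model: finite nonempty state spaces for the
unobserved confounders `U₁, U₂`, treatments `A₁, A₂` and outcomes `Y₁, Y₂`,
with priors `pU1, pU2`, treatment kernels `pA1, pA2` and outcome kernels
`pY1, pY2` (each nonnegative and summing to 1 over its first argument);
each unit's outcome may depend on both units' treatments. -/
structure DyadModel (U₁ U₂ A₁ A₂ Y₁ Y₂ : Type)
    [Fintype U₁] [Fintype U₂] [Fintype A₁] [Fintype A₂] [Fintype Y₁] [Fintype Y₂]
    [Nonempty U₁] [Nonempty U₂] [Nonempty A₁] [Nonempty A₂] [Nonempty Y₁] [Nonempty Y₂] where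
  pU1 : U₁ → ℝ
  pU2 : U₂ → ℝ
  pA1 : A₁ → U₁ → ℝ
  pA2 : A₂ → U₂ → ℝ
  pY1 : Y₁ → A₁ → A₂ → U₁ → ℝ
  pY2 : Y₂ → A₁ → A₂ → U₂ → ℝ
  pU1_nonneg : ∀ u₁, 0 ≤ pU1 u₁
  pU1_sum : ∑ u₁, pU1 u₁ = 1
  pU2_nonneg : ∀ u₂, 0 ≤ pU2 u₂
  pU2_sum : ∑ u₂, pU2 u₂ = 1
  pA1_nonneg : ∀ a₁ u₁, 0 ≤ pA1 a₁ u₁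
  pA1_sum : ∀ u₁, ∑ a₁, pA1 a₁ u₁ = 1
  pA2_nonneg : ∀ a₂ u₂, 0 ≤ pA2 a₂ u₂
  pA2_sum : ∀ u₂, ∑ a₂, pA2 a₂ u₂ = 1
  pY1_nonneg : ∀ y₁ a₁ a₂ u₁, 0 ≤ pY1 y₁ a₁ a₂ u₁
  pY1_sum : ∀ a₁ a₂ u₁, ∑ y₁, pY1 y₁ a₁ a₂ u₁ = 1
  pY2_nonneg : ∀ y₂ a₁ a₂ u₂, 0 ≤ pY2 y₂ a₁ a₂ u₂
  pY2_sum : ∀ a₁ a₂ u₂, ∑ y₂, pY2 y₂ a₁ a₂ u₂ = 1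

namespace DyadModel

variable {U₁ U₂ A₁ A₂ Y₁ Y₂ : Type}
    [Fintype U₁] [Fintype U₂] [Fintype A₁] [Fintype A₂] [Fintype Y₁] [Fintype Y₂]
    [Nonempty U₁] [Nonempty U₂] [Nonempty A₁] [Nonempty A₂] [Nonempty Y₁] [Nonempty Y₂]
    (ℳ : DyadModel U₁ U₂ A₁ A₂ Y₁ Y₂)

/-- The full joint distribution of the dyad model. -/
def joint (u₁ : U₁) (u₂ : U₂) (a₁ : A₁) (a₂ : A₂) (y₁ : Y₁) (y₂ : Y₂) : ℝ :=
  ℳ.pU1 u₁ * ℳ.pU2 u₂ * ℳ.pA1 a₁ u₁ * ℳ.pA2 a₂ u₂ *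
    ℳ.pY1 y₁ a₁ a₂ u₁ * ℳ.pY2 y₂ a₁ a₂ u₂

/-- The observed margin `pV(a₁, a₂, y₁, y₂)`. -/
def pV (a₁ : A₁) (a₂ : A₂) (y₁ : Y₁) (y₂ : Y₂) : ℝ :=
  ∑ u₁ : U₁, ∑ u₂ : U₂, ℳ.joint u₁ u₂ a₁ a₂ y₁ y₂

/-- The observed marginal `pV(a₁)`. -/
def pVa1 (a₁ : A₁) : ℝ := ∑ a₂ : A₂, ∑ y₁ : Y₁, ∑ y₂ : Y₂, ℳ.pV a₁ a₂ y₁ y₂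

/-- The observed marginal `pV(a₂)`. -/
def pVa2 (a₂ : A₂) : ℝ := ∑ a₁ : A₁, ∑ y₁ : Y₁, ∑ y₂ : Y₂, ℳ.pV a₁ a₂ y₁ y₂

/-- The observed marginal `pV(y₂, a₁)`. -/
def pVy2a1 (y₂ : Y₂) (a₁ : A₁) : ℝ := ∑ a₂ : A₂, ∑ y₁ : Y₁, ℳ.pV a₁ a₂ y₁ y₂

/-- The observed marginal `pV(y₁, a₂)`. -/
def pVy1a2 (y₁ : Y₁) (a₂ : A₂) : ℝ := ∑ a₁ : A₁, ∑ y₂ : Y₂, ℳ.pV a₁ a₂ y₁ y₂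

/-- The g-formula interventional distribution `p(Y₂ = y₂ | do(A₁ = a₁))`,
obtained by deleting the `A₁` factor and marginalizing. -/
def doY2 (y₂ : Y₂) (a₁ : A₁) : ℝ :=
  ∑ u₁ : U₁, ∑ u₂ : U₂, ∑ a₂ : A₂, ∑ y₁ : Y₁,
    ℳ.pU1 u₁ * ℳ.pU2 u₂ * ℳ.pA2 a₂ u₂ * ℳ.pY1 y₁ a₁ a₂ u₁ * ℳ.pY2 y₂ a₁ a₂ u₂

/-- The g-formula interventional distribution `p(Y₁ = y₁ | do(A₂ = a₂))`,
obtained by deleting the `A₂` factor and marginalizing. -/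
def doY1 (y₁ : Y₁) (a₂ : A₂) : ℝ :=
  ∑ u₁ : U₁, ∑ u₂ : U₂, ∑ a₁ : A₁, ∑ y₂ : Y₂,
    ℳ.pU1 u₁ * ℳ.pU2 u₂ * ℳ.pA1 a₁ u₁ * ℳ.pY1 y₁ a₁ a₂ u₁ * ℳ.pY2 y₂ a₁ a₂ u₂

end DyadModel


section Aux

private lemma sum_rot3 {α β γ : Type} [Fintype α] [Fintype β] [Fintype γ] (f : α → β → γ → ℝ) :
    ∑ a, ∑ b, ∑ c, f a b c = ∑ b, ∑ c, ∑ a, f a b c := by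
  rw [Finset.sum_comm]
  exact Finset.sum_congr rfl fun _ _ => Finset.sum_comm

private lemma sumCollapse1 {α : Type} [Fintype α] (c : ℝ) (f g : α → ℝ)
    (h : ∀ x, g x = c * f x) (hf : ∑ x, f x = 1) : ∑ x, g x = c := by
  simp only [h]; rw [← Finset.mul_sum, hf, mul_one]

namespace DyadModel

variable {U₁ U₂ A₁ A₂ Y₁ Y₂ : Type}
    [Fintype U₁] [Fintype U₂] [Fintype A₁] [Fintype A₂] [Fintype Y₁] [Fintype Y₂]
    [Nonempty U₁] [Nonempty U₂] [Nonempty A₁] [Nonempty A₂] [Nonempty Y₁] [Nonempty Y₂]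
    (ℳ : DyadModel U₁ U₂ A₁ A₂ Y₁ Y₂)

private lemma doY2_eq (y₂ : Y₂) (a₁ : A₁) :
    ℳ.doY2 y₂ a₁ = ∑ u₂, ∑ a₂, ℳ.pU2 u₂ * ℳ.pA2 a₂ u₂ * ℳ.pY2 y₂ a₁ a₂ u₂ := by
  unfold doY2
  have h1 : ∀ (u₁ : U₁) (u₂ : U₂) (a₂ : A₂),
      ∑ y₁, ℳ.pU1 u₁ * ℳ.pU2 u₂ * ℳ.pA2 a₂ u₂ * ℳ.pY1 y₁ a₁ a₂ u₁ * ℳ.pY2 y₂ a₁ a₂ u₂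
        = ℳ.pU1 u₁ * (ℳ.pU2 u₂ * ℳ.pA2 a₂ u₂ * ℳ.pY2 y₂ a₁ a₂ u₂) :=
    fun u₁ u₂ a₂ => sumCollapse1 _ _ _ (fun y₁ => by ring) (ℳ.pY1_sum a₁ a₂ u₁)
  simp only [h1, ← Finset.mul_sum]
  rw [← Finset.sum_mul, ℳ.pU1_sum, one_mul]

private lemma pVa1_eq (a₁ : A₁) :
    ℳ.pVa1 a₁ = ∑ u₁, ℳ.pU1 u₁ * ℳ.pA1 a₁ u₁ := by
  unfold pVa1 pV joint
  have hs1 : ∀ (a₂ : A₂) (y₁ : Y₁),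
      (∑ y₂ : Y₂, ∑ u₁ : U₁, ∑ u₂ : U₂,
        ℳ.pU1 u₁ * ℳ.pU2 u₂ * ℳ.pA1 a₁ u₁ * ℳ.pA2 a₂ u₂ * ℳ.pY1 y₁ a₁ a₂ u₁ * ℳ.pY2 y₂ a₁ a₂ u₂)
      = ∑ u₁ : U₁, ∑ u₂ : U₂, ∑ y₂ : Y₂,
        ℳ.pU1 u₁ * ℳ.pU2 u₂ * ℳ.pA1 a₁ u₁ * ℳ.pA2 a₂ u₂ * ℳ.pY1 y₁ a₁ a₂ u₁ * ℳ.pY2 y₂ a₁ a₂ u₂ :=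
    fun a₂ y₁ => sum_rot3 _
  rw [Finset.sum_comm]
  simp only [hs1]
  have h1 : ∀ (a₂ : A₂) (y₁ : Y₁) (u₁ : U₁) (u₂ : U₂),
      (∑ y₂ : Y₂, ℳ.pU1 u₁ * ℳ.pU2 u₂ * ℳ.pA1 a₁ u₁ * ℳ.pA2 a₂ u₂ * ℳ.pY1 y₁ a₁ a₂ u₁ * ℳ.pY2 y₂ a₁ a₂ u₂)
      = ℳ.pU1 u₁ * ℳ.pU2 u₂ * ℳ.pA1 a₁ u₁ * ℳ.pA2 a₂ u₂ * ℳ.pY1 y₁ a₁ a₂ u₁ :=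
    fun a₂ y₁ u₁ u₂ => sumCollapse1 _ _ _ (fun y₂ => by ring) (ℳ.pY2_sum a₁ a₂ u₂)
  simp only [h1]
  rw [sum_rot3]
  have h2 : ∀ (a₂ : A₂) (u₁ : U₁),
      (∑ y₁ : Y₁, ∑ u₂ : U₂, ℳ.pU1 u₁ * ℳ.pU2 u₂ * ℳ.pA1 a₁ u₁ * ℳ.pA2 a₂ u₂ * ℳ.pY1 y₁ a₁ a₂ u₁)
      = ∑ u₂ : U₂, ∑ y₁ : Y₁, ℳ.pU1 u₁ * ℳ.pU2 u₂ * ℳ.pA1 a₁ u₁ * ℳ.pA2 a₂ u₂ * ℳ.pY1 y₁ a₁ a₂ u₁ :=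
    fun _ _ => Finset.sum_comm
  simp only [h2]
  have h3 : ∀ (a₂ : A₂) (u₁ : U₁) (u₂ : U₂),
      (∑ y₁ : Y₁, ℳ.pU1 u₁ * ℳ.pU2 u₂ * ℳ.pA1 a₁ u₁ * ℳ.pA2 a₂ u₂ * ℳ.pY1 y₁ a₁ a₂ u₁)
      = ℳ.pU1 u₁ * ℳ.pU2 u₂ * ℳ.pA1 a₁ u₁ * ℳ.pA2 a₂ u₂ :=
    fun a₂ u₁ u₂ => sumCollapse1 _ _ _ (fun y₁ => by ring) (ℳ.pY1_sum a₁ a₂ u₁)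
  simp only [h3]
  rw [sum_rot3]
  have h4 : ∀ (u₁ : U₁) (u₂ : U₂),
      (∑ a₂ : A₂, ℳ.pU1 u₁ * ℳ.pU2 u₂ * ℳ.pA1 a₁ u₁ * ℳ.pA2 a₂ u₂)
      = ℳ.pU1 u₁ * ℳ.pU2 u₂ * ℳ.pA1 a₁ u₁ :=
    fun u₁ u₂ => sumCollapse1 _ _ _ (fun a₂ => by ring) (ℳ.pA2_sum u₂)
  simp only [h4]
  have h5 : ∀ (u₁ : U₁),
      (∑ u₂ : U₂, ℳ.pU1 u₁ * ℳ.pU2 u₂ * ℳ.pA1 a₁ u₁) = ℳ.pU1 u₁ * ℳ.pA1 a₁ u₁ :=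
    fun u₁ => sumCollapse1 _ _ _ (fun u₂ => by ring) ℳ.pU2_sum
  simp only [h5]

private lemma pVy2a1_eq (y₂ : Y₂) (a₁ : A₁) :
    ℳ.pVy2a1 y₂ a₁ = (∑ u₁, ℳ.pU1 u₁ * ℳ.pA1 a₁ u₁) *
      (∑ u₂, ∑ a₂, ℳ.pU2 u₂ * ℳ.pA2 a₂ u₂ * ℳ.pY2 y₂ a₁ a₂ u₂) := by
  unfold pVy2a1 pV joint
  have hs1 : ∀ (a₂ : A₂),
      (∑ y₁ : Y₁, ∑ u₁ : U₁, ∑ u₂ : U₂,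
        ℳ.pU1 u₁ * ℳ.pU2 u₂ * ℳ.pA1 a₁ u₁ * ℳ.pA2 a₂ u₂ * ℳ.pY1 y₁ a₁ a₂ u₁ * ℳ.pY2 y₂ a₁ a₂ u₂)
      = ∑ u₁ : U₁, ∑ u₂ : U₂, ∑ y₁ : Y₁,
        ℳ.pU1 u₁ * ℳ.pU2 u₂ * ℳ.pA1 a₁ u₁ * ℳ.pA2 a₂ u₂ * ℳ.pY1 y₁ a₁ a₂ u₁ * ℳ.pY2 y₂ a₁ a₂ u₂ :=
    fun a₂ => sum_rot3 _
  simp only [hs1]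
  have h1 : ∀ (a₂ : A₂) (u₁ : U₁) (u₂ : U₂),
      (∑ y₁ : Y₁, ℳ.pU1 u₁ * ℳ.pU2 u₂ * ℳ.pA1 a₁ u₁ * ℳ.pA2 a₂ u₂ * ℳ.pY1 y₁ a₁ a₂ u₁ * ℳ.pY2 y₂ a₁ a₂ u₂)
      = ℳ.pU1 u₁ * ℳ.pU2 u₂ * ℳ.pA1 a₁ u₁ * ℳ.pA2 a₂ u₂ * ℳ.pY2 y₂ a₁ a₂ u₂ :=
    fun a₂ u₁ u₂ => sumCollapse1 _ _ _ (fun y₁ => by ring) (ℳ.pY1_sum a₁ a₂ u₁)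
  simp only [h1]
  rw [sum_rot3]
  have h2 : ∀ (u₁ : U₁) (u₂ : U₂) (a₂ : A₂),
      ℳ.pU1 u₁ * ℳ.pU2 u₂ * ℳ.pA1 a₁ u₁ * ℳ.pA2 a₂ u₂ * ℳ.pY2 y₂ a₁ a₂ u₂
      = (ℳ.pU1 u₁ * ℳ.pA1 a₁ u₁) * (ℳ.pU2 u₂ * ℳ.pA2 a₂ u₂ * ℳ.pY2 y₂ a₁ a₂ u₂) :=
    fun _ _ _ => by ring
  simp only [h2, ← Finset.mul_sum, ← Finset.sum_mul]

private lemma doY1_eq (y₁ : Y₁) (a₂ : A₂) :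
    ℳ.doY1 y₁ a₂ = ∑ u₁, ∑ a₁, ℳ.pU1 u₁ * ℳ.pA1 a₁ u₁ * ℳ.pY1 y₁ a₁ a₂ u₁ := by
  unfold doY1
  have h1 : ∀ (u₁ : U₁) (u₂ : U₂) (a₁ : A₁),
      (∑ y₂ : Y₂, ℳ.pU1 u₁ * ℳ.pU2 u₂ * ℳ.pA1 a₁ u₁ * ℳ.pY1 y₁ a₁ a₂ u₁ * ℳ.pY2 y₂ a₁ a₂ u₂)
      = ℳ.pU1 u₁ * ℳ.pU2 u₂ * ℳ.pA1 a₁ u₁ * ℳ.pY1 y₁ a₁ a₂ u₁ :=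
    fun u₁ u₂ a₁ => sumCollapse1 _ _ _ (fun y₂ => by ring) (ℳ.pY2_sum a₁ a₂ u₂)
  simp only [h1]
  have h2 : ∀ (u₁ : U₁),
      (∑ u₂ : U₂, ∑ a₁ : A₁, ℳ.pU1 u₁ * ℳ.pU2 u₂ * ℳ.pA1 a₁ u₁ * ℳ.pY1 y₁ a₁ a₂ u₁)
      = ∑ a₁ : A₁, ∑ u₂ : U₂, ℳ.pU1 u₁ * ℳ.pU2 u₂ * ℳ.pA1 a₁ u₁ * ℳ.pY1 y₁ a₁ a₂ u₁ :=
    fun _ => Finset.sum_comm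
  simp only [h2]
  have h3 : ∀ (u₁ : U₁) (a₁ : A₁),
      (∑ u₂ : U₂, ℳ.pU1 u₁ * ℳ.pU2 u₂ * ℳ.pA1 a₁ u₁ * ℳ.pY1 y₁ a₁ a₂ u₁)
      = ℳ.pU1 u₁ * ℳ.pA1 a₁ u₁ * ℳ.pY1 y₁ a₁ a₂ u₁ :=
    fun u₁ a₁ => sumCollapse1 _ _ _ (fun u₂ => by ring) ℳ.pU2_sum
  simp only [h3]

private lemma pVa2_eq (a₂ : A₂) :
    ℳ.pVa2 a₂ = ∑ u₂, ℳ.pU2 u₂ * ℳ.pA2 a₂ u₂ := by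
  unfold pVa2 pV joint
  have hs1 : ∀ (a₁ : A₁) (y₁ : Y₁),
      (∑ y₂ : Y₂, ∑ u₁ : U₁, ∑ u₂ : U₂,
        ℳ.pU1 u₁ * ℳ.pU2 u₂ * ℳ.pA1 a₁ u₁ * ℳ.pA2 a₂ u₂ * ℳ.pY1 y₁ a₁ a₂ u₁ * ℳ.pY2 y₂ a₁ a₂ u₂)
      = ∑ u₁ : U₁, ∑ u₂ : U₂, ∑ y₂ : Y₂,
        ℳ.pU1 u₁ * ℳ.pU2 u₂ * ℳ.pA1 a₁ u₁ * ℳ.pA2 a₂ u₂ * ℳ.pY1 y₁ a₁ a₂ u₁ * ℳ.pY2 y₂ a₁ a₂ u₂ :=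
    fun _ _ => sum_rot3 _
  simp only [hs1]
  have h1 : ∀ (a₁ : A₁) (y₁ : Y₁) (u₁ : U₁) (u₂ : U₂),
      (∑ y₂ : Y₂, ℳ.pU1 u₁ * ℳ.pU2 u₂ * ℳ.pA1 a₁ u₁ * ℳ.pA2 a₂ u₂ * ℳ.pY1 y₁ a₁ a₂ u₁ * ℳ.pY2 y₂ a₁ a₂ u₂)
      = ℳ.pU1 u₁ * ℳ.pU2 u₂ * ℳ.pA1 a₁ u₁ * ℳ.pA2 a₂ u₂ * ℳ.pY1 y₁ a₁ a₂ u₁ :=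
    fun a₁ y₁ u₁ u₂ => sumCollapse1 _ _ _ (fun y₂ => by ring) (ℳ.pY2_sum a₁ a₂ u₂)
  simp only [h1]
  have hs2 : ∀ (a₁ : A₁),
      (∑ y₁ : Y₁, ∑ u₁ : U₁, ∑ u₂ : U₂,
        ℳ.pU1 u₁ * ℳ.pU2 u₂ * ℳ.pA1 a₁ u₁ * ℳ.pA2 a₂ u₂ * ℳ.pY1 y₁ a₁ a₂ u₁)
      = ∑ u₁ : U₁, ∑ u₂ : U₂, ∑ y₁ : Y₁,
        ℳ.pU1 u₁ * ℳ.pU2 u₂ * ℳ.pA1 a₁ u₁ * ℳ.pA2 a₂ u₂ * ℳ.pY1 y₁ a₁ a₂ u₁ :=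
    fun _ => sum_rot3 _
  simp only [hs2]
  have h2 : ∀ (a₁ : A₁) (u₁ : U₁) (u₂ : U₂),
      (∑ y₁ : Y₁, ℳ.pU1 u₁ * ℳ.pU2 u₂ * ℳ.pA1 a₁ u₁ * ℳ.pA2 a₂ u₂ * ℳ.pY1 y₁ a₁ a₂ u₁)
      = ℳ.pU1 u₁ * ℳ.pU2 u₂ * ℳ.pA1 a₁ u₁ * ℳ.pA2 a₂ u₂ :=
    fun a₁ u₁ u₂ => sumCollapse1 _ _ _ (fun y₁ => by ring) (ℳ.pY1_sum a₁ a₂ u₁)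
  simp only [h2]
  rw [sum_rot3]
  have h3 : ∀ (u₁ : U₁) (u₂ : U₂),
      (∑ a₁ : A₁, ℳ.pU1 u₁ * ℳ.pU2 u₂ * ℳ.pA1 a₁ u₁ * ℳ.pA2 a₂ u₂)
      = ℳ.pU1 u₁ * ℳ.pU2 u₂ * ℳ.pA2 a₂ u₂ :=
    fun u₁ u₂ => sumCollapse1 _ _ _ (fun a₁ => by ring) (ℳ.pA1_sum u₁)
  simp only [h3]
  rw [Finset.sum_comm]
  have h4 : ∀ (u₂ : U₂),
      (∑ u₁ : U₁, ℳ.pU1 u₁ * ℳ.pU2 u₂ * ℳ.pA2 a₂ u₂) = ℳ.pU2 u₂ * ℳ.pA2 a₂ u₂ :=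
    fun u₂ => sumCollapse1 _ _ _ (fun u₁ => by ring) ℳ.pU1_sum
  simp only [h4]

private lemma pVy1a2_eq (y₁ : Y₁) (a₂ : A₂) :
    ℳ.pVy1a2 y₁ a₂ = (∑ u₁, ∑ a₁, ℳ.pU1 u₁ * ℳ.pA1 a₁ u₁ * ℳ.pY1 y₁ a₁ a₂ u₁) *
      (∑ u₂, ℳ.pU2 u₂ * ℳ.pA2 a₂ u₂) := by
  unfold pVy1a2 pV joint
  have hs1 : ∀ (a₁ : A₁),
      (∑ y₂ : Y₂, ∑ u₁ : U₁, ∑ u₂ : U₂,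
        ℳ.pU1 u₁ * ℳ.pU2 u₂ * ℳ.pA1 a₁ u₁ * ℳ.pA2 a₂ u₂ * ℳ.pY1 y₁ a₁ a₂ u₁ * ℳ.pY2 y₂ a₁ a₂ u₂)
      = ∑ u₁ : U₁, ∑ u₂ : U₂, ∑ y₂ : Y₂,
        ℳ.pU1 u₁ * ℳ.pU2 u₂ * ℳ.pA1 a₁ u₁ * ℳ.pA2 a₂ u₂ * ℳ.pY1 y₁ a₁ a₂ u₁ * ℳ.pY2 y₂ a₁ a₂ u₂ :=
    fun _ => sum_rot3 _
  simp only [hs1]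
  have h1 : ∀ (a₁ : A₁) (u₁ : U₁) (u₂ : U₂),
      (∑ y₂ : Y₂, ℳ.pU1 u₁ * ℳ.pU2 u₂ * ℳ.pA1 a₁ u₁ * ℳ.pA2 a₂ u₂ * ℳ.pY1 y₁ a₁ a₂ u₁ * ℳ.pY2 y₂ a₁ a₂ u₂)
      = ℳ.pU1 u₁ * ℳ.pU2 u₂ * ℳ.pA1 a₁ u₁ * ℳ.pA2 a₂ u₂ * ℳ.pY1 y₁ a₁ a₂ u₁ :=
    fun a₁ u₁ u₂ => sumCollapse1 _ _ _ (fun y₂ => by ring) (ℳ.pY2_sum a₁ a₂ u₂)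
  simp only [h1]
  rw [sum_rot3]
  have h2 : ∀ (u₁ : U₁),
      (∑ u₂ : U₂, ∑ a₁ : A₁,
        ℳ.pU1 u₁ * ℳ.pU2 u₂ * ℳ.pA1 a₁ u₁ * ℳ.pA2 a₂ u₂ * ℳ.pY1 y₁ a₁ a₂ u₁)
      = ∑ a₁ : A₁, ∑ u₂ : U₂,
        ℳ.pU1 u₁ * ℳ.pU2 u₂ * ℳ.pA1 a₁ u₁ * ℳ.pA2 a₂ u₂ * ℳ.pY1 y₁ a₁ a₂ u₁ :=
    fun _ => Finset.sum_comm
  simp only [h2]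
  have h3 : ∀ (u₁ : U₁) (a₁ : A₁) (u₂ : U₂),
      ℳ.pU1 u₁ * ℳ.pU2 u₂ * ℳ.pA1 a₁ u₁ * ℳ.pA2 a₂ u₂ * ℳ.pY1 y₁ a₁ a₂ u₁
      = (ℳ.pU1 u₁ * ℳ.pA1 a₁ u₁ * ℳ.pY1 y₁ a₁ a₂ u₁) * (ℳ.pU2 u₂ * ℳ.pA2 a₂ u₂) :=
    fun _ _ _ => by ring
  simp only [h3, ← Finset.mul_sum, ← Finset.sum_mul]

end DyadModel
end Aux
/-- In the dyad interference model, the unit-specific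
interventional distributions are identified by observed conditionals despite
the unobserved confounders: whenever `pV(a₁) > 0`,
`p(Y₂ = y₂ | do(a₁)) = pV(y₂, a₁) / pV(a₁)`, and symmetrically, whenever
`pV(a₂) > 0`, `p(Y₁ = y₁ | do(a₂)) = pV(y₁, a₂) / pV(a₂)`. -/
theorem DyadModel.dyad_identification
    {U₁ U₂ A₁ A₂ Y₁ Y₂ : Type}
    [Fintype U₁] [Fintype U₂] [Fintype A₁] [Fintype A₂] [Fintype Y₁] [Fintype Y₂]
    [Nonempty U₁] [Nonempty U₂] [Nonempty A₁] [Nonempty A₂] [Nonempty Y₁] [Nonempty Y₂]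
    (ℳ : DyadModel U₁ U₂ A₁ A₂ Y₁ Y₂) :
    (∀ a₁ : A₁, 0 < ℳ.pVa1 a₁ → ∀ y₂ : Y₂,
      ℳ.doY2 y₂ a₁ = ℳ.pVy2a1 y₂ a₁ / ℳ.pVa1 a₁) ∧
    (∀ a₂ : A₂, 0 < ℳ.pVa2 a₂ → ∀ y₁ : Y₁,
      ℳ.doY1 y₁ a₂ = ℳ.pVy1a2 y₁ a₂ / ℳ.pVa2 a₂) := by

  constructor
  · intro a₁ h y₂
    have hT : (∑ u₁, ℳ.pU1 u₁ * ℳ.pA1 a₁ u₁) ≠ 0 := by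
      rw [← ℳ.pVa1_eq]; exact ne_of_gt h
    rw [ℳ.doY2_eq, ℳ.pVy2a1_eq, ℳ.pVa1_eq, mul_comm, mul_div_assoc, div_self hT, mul_one]
  · intro a₂ h y₁
    have hT : (∑ u₂, ℳ.pU2 u₂ * ℳ.pA2 a₂ u₂) ≠ 0 := by
      rw [← ℳ.pVa2_eq]; exact ne_of_gt h
    rw [ℳ.doY1_eq, ℳ.pVy1a2_eq, ℳ.pVa2_eq, mul_div_assoc, div_self hT, mul_one]
end
end
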